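/- arXiv:2212.09966 — 9 statements merged into one kernel-verified Lean document; each statement's English description precedes it below -/
import Mathlib

section
/- For odd positive integers k and any nonnegative integer n, the alternating sum 2·∑_{s=0}^{n} (-1)^{n-s} · C(n + (s+1/2)(k+1), 2n+1) · C(2n+1, n-s) equals (k+1)^{2n+1}, where C(x, m) denotes the generalized binomial coefficient (here x = n + (s+1/2)(k+1) is a half-integer when k is odd; equivalently multiply through by 2^{2n+1}·(2n+1)! to get an identity among integers). -/
/-- Generalized binomial coefficient `C(x, m) = x(x-1)⋯(x-m+1)/m!` for rational `x`. -/
noncomputable def qchoose (x : ℚ) (m : ℕ) : ℚ :=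
  (∏ i ∈ Finset.range m, (x - i)) / (Nat.factorial m)

open Polynomial Finset in
lemma pascal_sum_aux (m : ℕ) (f : ℕ → ℚ) :
    ∑ r ∈ range (m + 1), (-1 : ℚ) ^ r * (m.choose r) * (f r - f (r + 1))
      = ∑ r ∈ range (m + 2), (-1 : ℚ) ^ r * ((m + 1).choose r) * f r := by
  have h1 : ∀ r : ℕ, (-1 : ℚ) ^ r * (m.choose r) * (f r - f (r + 1))
      = (-1 : ℚ) ^ r * (m.choose r) * f r
        + (-1 : ℚ) ^ (r + 1) * (m.choose r) * f (r + 1) := by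
    intro r; ring
  simp_rw [h1]
  rw [Finset.sum_add_distrib]
  have h2 : ∑ r ∈ range (m + 1), (-1 : ℚ) ^ r * (m.choose r) * f r
      = ∑ r ∈ range (m + 2), (-1 : ℚ) ^ r * (m.choose r) * f r := by
    rw [Finset.sum_range_succ (n := m + 1)]
    simp [Nat.choose_eq_zero_of_lt (Nat.lt_succ_self m)]
  have h3 : ∑ r ∈ range (m + 1), (-1 : ℚ) ^ (r + 1) * (m.choose r) * f (r + 1)
      = ∑ r ∈ range (m + 2),
          (if r = 0 then 0 else (-1 : ℚ) ^ r * (m.choose (r - 1)) * f r) := by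
    rw [Finset.sum_range_succ' (fun r =>
      (if r = 0 then (0:ℚ) else (-1 : ℚ) ^ r * (m.choose (r - 1)) * f r)) (m + 1)]
    simp
  rw [h2, h3, ← Finset.sum_add_distrib]
  refine Finset.sum_congr rfl fun r _ => ?_
  cases r with
  | zero => simp
  | succ j =>
      simp only [Nat.succ_ne_zero, if_false, Nat.add_sub_cancel,
        Nat.choose_succ_succ' m j]
      push_cast
      ring

open Polynomial Finset in
lemma diff_poly (m : ℕ) : ∀ P : ℚ[X], P.natDegree ≤ m → ∀ a t : ℚ,
    ∑ r ∈ range (m + 1), (-1 : ℚ) ^ r * (m.choose r) * P.eval (a - r * t)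
      = (m.factorial : ℚ) * t ^ m * P.coeff m := by
  induction m with
  | zero =>
      intro P hP a t
      rw [Polynomial.eq_C_of_natDegree_le_zero hP]
      simp
  | succ m ih =>
      intro P hP a t
      set Q : ℚ[X] := P - Polynomial.taylor (-t) P with hQ
      have hQeval : ∀ y : ℚ, Q.eval y = P.eval y - P.eval (y - t) := by
        intro y
        simp [hQ, Polynomial.taylor_eval, sub_eq_add_neg]
      have hQcoeff : ∀ j, m < j → Q.coeff j = 0 := by
        intro j hj
        rcases eq_or_lt_of_le (Nat.succ_le_of_lt hj) with hje | hje
        · -- j = m + 1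
          subst hje
          have hd : (Polynomial.hasseDeriv (m + 1) P).natDegree ≤ 0 := by
            have := Polynomial.natDegree_hasseDeriv_le P (m + 1)
            omega
          rw [hQ, Polynomial.coeff_sub, Polynomial.taylor_coeff,
            Polynomial.eq_C_of_natDegree_le_zero hd]
          simp [Polynomial.hasseDeriv_coeff]
        · -- j > m + 1
          have h1 : P.coeff j = 0 :=
            Polynomial.coeff_eq_zero_of_natDegree_lt (lt_of_le_of_lt hP hje)
          have h2 : (Polynomial.taylor (-t) P).coeff j = 0 := by
            apply Polynomial.coeff_eq_zero_of_natDegree_lt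
            rw [Polynomial.natDegree_taylor]
            exact lt_of_le_of_lt hP hje
          simp [hQ, h1, h2]
      have hQdeg : Q.natDegree ≤ m :=
        Polynomial.natDegree_le_iff_coeff_eq_zero.mpr hQcoeff
      have hQm : Q.coeff m = ((m : ℚ) + 1) * t * P.coeff (m + 1) := by
        have hd : (Polynomial.hasseDeriv m P).natDegree < 2 := by
          have := Polynomial.natDegree_hasseDeriv_le P m
          omega
        have heval : (Polynomial.hasseDeriv m P).eval (-t)
            = P.coeff m + ((m : ℚ) + 1) * P.coeff (m + 1) * (-t) := by
          rw [Polynomial.eval_eq_sum_range' hd]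
          rw [Finset.sum_range_succ, Finset.sum_range_succ]
          simp [Polynomial.hasseDeriv_coeff, Nat.choose_succ_self_right, add_comm 1 m]
        rw [hQ, Polynomial.coeff_sub, Polynomial.taylor_coeff, heval]
        ring
      have hps := pascal_sum_aux m (fun r => P.eval (a - r * t))
      rw [← hps]
      have hterm : ∀ r : ℕ,
          P.eval (a - r * t) - P.eval (a - (r + 1 : ℕ) * t) = Q.eval (a - r * t) := by
        intro r
        rw [hQeval]
        push_cast
        ring_nf
      calc ∑ r ∈ range (m + 1), (-1 : ℚ) ^ r * (m.choose r)
              * (P.eval (a - r * t) - P.eval (a - (r + 1 : ℕ) * t))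
            = ∑ r ∈ range (m + 1), (-1 : ℚ) ^ r * (m.choose r) * Q.eval (a - r * t) := by
              refine Finset.sum_congr rfl fun r _ => ?_
              rw [hterm]
        _ = (m.factorial : ℚ) * t ^ m * Q.coeff m := ih Q hQdeg a t
        _ = ((m + 1).factorial : ℚ) * t ^ (m + 1) * P.coeff (m + 1) := by
              rw [hQm, Nat.factorial_succ]
              push_cast
              ring

/-- For odd positive `k` and any `n`,
`2·∑_{s=0}^{n} (-1)^{n-s} C(n+(s+1/2)(k+1), 2n+1) C(2n+1, n-s) = (k+1)^{2n+1}`. -/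
theorem steinberg_odd_identity (k n : ℕ) (hk : Odd k) (hkpos : 0 < k) :
    2 * ∑ s ∈ Finset.range (n + 1), (-1 : ℚ) ^ (n - s) *
        qchoose ((n : ℚ) + ((s : ℚ) + 1/2) * ((k : ℚ) + 1)) (2 * n + 1) *
        (Nat.choose (2 * n + 1) (n - s) : ℚ) =
      ((k : ℚ) + 1) ^ (2 * n + 1) := by
  classical
  set t : ℚ := (k : ℚ) + 1 with ht
  set a : ℚ := (n : ℚ) + ((n : ℚ) + 1/2) * t with ha
  set P : Polynomial ℚ := ∏ i ∈ Finset.range (2 * n + 1), (Polynomial.X - Polynomial.C (i : ℚ))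
    with hP
  have hPmonic : P.Monic :=
    Polynomial.monic_prod_of_monic _ _ fun i _ => Polynomial.monic_X_sub_C _
  have hPdeg : P.natDegree = 2 * n + 1 := by
    rw [hP, Polynomial.natDegree_prod_of_monic _ _ fun i _ => Polynomial.monic_X_sub_C _]
    simp only [Polynomial.natDegree_X_sub_C]
    simp
  have hPcoeff : P.coeff (2 * n + 1) = 1 := by
    have := hPmonic.coeff_natDegree
    rwa [hPdeg] at this
  have hPeval : ∀ x : ℚ, P.eval x = ∏ i ∈ Finset.range (2 * n + 1), (x - i) := by
    intro x
    simp [hP, Polynomial.eval_prod]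
  have hqc : ∀ x : ℚ, qchoose x (2 * n + 1) = P.eval x / ((2 * n + 1).factorial : ℚ) := by
    intro x
    rw [qchoose, hPeval]
  have key := diff_poly (2 * n + 1) P (le_of_eq hPdeg) a t
  -- split the sum
  have hsplit : ∑ r ∈ Finset.range (2 * n + 1 + 1),
        (-1 : ℚ) ^ r * ((2 * n + 1).choose r) * P.eval (a - r * t)
      = (∑ r ∈ Finset.range (n + 1),
          (-1 : ℚ) ^ r * ((2 * n + 1).choose r) * P.eval (a - r * t))
        + ∑ s ∈ Finset.range (n + 1),
          (-1 : ℚ) ^ (n + 1 + s) * ((2 * n + 1).choose (n + 1 + s))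
            * P.eval (a - (n + 1 + s : ℕ) * t) := by
    have h : 2 * n + 1 + 1 = (n + 1) + (n + 1) := by ring
    rw [h, Finset.sum_range_add]
  -- the reflected half
  have hrefl : ∀ s : ℕ, s ≤ n →
      P.eval (a - (n + 1 + s : ℕ) * t)
        = - P.eval ((n : ℚ) + ((s : ℚ) + 1/2) * t) := by
    intro s hs
    rw [hPeval, hPeval]
    rw [← Finset.prod_range_reflect (fun i => (a - (n + 1 + s : ℕ) * t - i)) (2 * n + 1)]
    have hfac : ∀ i ∈ Finset.range (2 * n + 1),
        (a - (n + 1 + s : ℕ) * t - ((2 * n + 1 - 1 - i : ℕ) : ℚ))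
          = (-1) * ((n : ℚ) + ((s : ℚ) + 1/2) * t - i) := by
      intro i hi
      have hi' : i ≤ 2 * n := by
        have := Finset.mem_range.mp hi; omega
      have hcast : ((2 * n + 1 - 1 - i : ℕ) : ℚ) = 2 * (n : ℚ) - (i : ℚ) := by
        have : (2 * n + 1 - 1 - i : ℕ) = 2 * n - i := by omega
        rw [this, Nat.cast_sub hi']
        push_cast
        ring
      rw [hcast, ha]
      push_cast
      ring
    rw [Finset.prod_congr rfl hfac, Finset.prod_mul_distrib, Finset.prod_const,
      Finset.card_range]
    have : (-1 : ℚ) ^ (2 * n + 1) = -1 := by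
      rw [pow_succ, pow_mul]
      norm_num
    rw [this]
    ring
  -- first half equals E
  have hE1 : ∑ r ∈ Finset.range (n + 1),
        (-1 : ℚ) ^ r * ((2 * n + 1).choose r) * P.eval (a - r * t)
      = ∑ s ∈ Finset.range (n + 1), (-1 : ℚ) ^ (n - s) *
          P.eval ((n : ℚ) + ((s : ℚ) + 1/2) * t) * ((2 * n + 1).choose (n - s)) := by
    rw [← Finset.sum_range_reflect (fun r =>
      (-1 : ℚ) ^ r * ((2 * n + 1).choose r) * P.eval (a - r * t)) (n + 1)]
    refine Finset.sum_congr rfl fun s hs => ?_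
    have hs' : s ≤ n := by have := Finset.mem_range.mp hs; omega
    have h1 : n + 1 - 1 - s = n - s := by omega
    have hcast : ((n - s : ℕ) : ℚ) = (n : ℚ) - (s : ℚ) := Nat.cast_sub hs'
    have hx : a - ((n - s : ℕ) : ℚ) * t = (n : ℚ) + ((s : ℚ) + 1/2) * t := by
      rw [hcast, ha]; ring
    rw [h1, hx]
    ring
  -- second half equals E
  have hE2 : ∑ s ∈ Finset.range (n + 1),
        (-1 : ℚ) ^ (n + 1 + s) * ((2 * n + 1).choose (n + 1 + s))
          * P.eval (a - (n + 1 + s : ℕ) * t)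
      = ∑ s ∈ Finset.range (n + 1), (-1 : ℚ) ^ (n - s) *
          P.eval ((n : ℚ) + ((s : ℚ) + 1/2) * t) * ((2 * n + 1).choose (n - s)) := by
    refine Finset.sum_congr rfl fun s hs => ?_
    have hs' : s ≤ n := by have := Finset.mem_range.mp hs; omega
    have hch : (2 * n + 1).choose (n + 1 + s) = (2 * n + 1).choose (n - s) := by
      have h1 : n + 1 + s ≤ 2 * n + 1 := by omega
      have h2 : 2 * n + 1 - (n + 1 + s) = n - s := by omega
      rw [← h2, Nat.choose_symm h1]
    have hsign : (-1 : ℚ) ^ (n + 1 + s) = - (-1 : ℚ) ^ (n - s) := by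
      have h3 : n + 1 + s = (n - s) + (2 * s + 1) := by omega
      rw [h3, pow_add]
      rw [pow_succ, pow_mul]
      norm_num
    rw [hrefl s hs', hch, hsign]
    ring
  -- assemble
  have hfact : ((2 * n + 1).factorial : ℚ) ≠ 0 := by
    exact_mod_cast Nat.factorial_ne_zero _
  have hgoal : 2 * ∑ s ∈ Finset.range (n + 1), (-1 : ℚ) ^ (n - s) *
        qchoose ((n : ℚ) + ((s : ℚ) + 1/2) * t) (2 * n + 1) *
        ((2 * n + 1).choose (n - s) : ℚ)
      = (2 * ∑ s ∈ Finset.range (n + 1), (-1 : ℚ) ^ (n - s) *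
          P.eval ((n : ℚ) + ((s : ℚ) + 1/2) * t) * ((2 * n + 1).choose (n - s)))
          / ((2 * n + 1).factorial : ℚ) := by
    rw [mul_div_assoc, Finset.sum_div]
    congr 1
    refine Finset.sum_congr rfl fun s _ => ?_
    rw [hqc]
    field_simp
  rw [hgoal]
  rw [show (2 : ℚ) * ∑ s ∈ Finset.range (n + 1), (-1 : ℚ) ^ (n - s) *
          P.eval ((n : ℚ) + ((s : ℚ) + 1/2) * t) * ((2 * n + 1).choose (n - s))
      = ∑ r ∈ Finset.range (2 * n + 1 + 1),
        (-1 : ℚ) ^ r * ((2 * n + 1).choose r) * P.eval (a - r * t) from by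
    rw [hsplit, hE1, hE2]; ring]
  rw [key, hPcoeff]
  field_simp
end

section
/- For even nonnegative integers k and any nonnegative integer n, ∑_{s=0}^{n} (-1)^{n-s} · C(n - 1/2 + (s+1/2)(k+1), 2n) · C(2n+1, n-s) · (2s+1)/(2n+1) = (k+1)^{2n}, where C denotes the generalized binomial coefficient. -/
/-!
Put `m = k + 1` and `a = (2s+1)m`. The `2n` factors of the binomial coefficient are
`(a + 2n - 1 - 2i)/2`, which pair up into `4⁻ⁿ ∏_{l<n} (a² - (2l+1)²)`; so the summand is a
constant multiple of `(-1)^(n-s) C(2n+1, n-s) P(a)` for the odd polynomial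
`P x = x ∏_{l<n} (x² - (2l+1)²)`.
Because `P` is odd, the sum over `s` is half of the full alternating sum
`∑_{j ≤ 2n+1} (-1)^(2n+1-j) C(2n+1, j) P((2j - 2n - 1)m)`, and this is the `(2n+1)`-st forward
difference of a polynomial in `j` of degree `2n+1` with leading coefficient `(2m)^(2n+1)`.
-/

open Polynomial Finset Nat

theorem sum_range_alternating_choose_mul_eval {R : Type*} [CommRing R] (P : R[X]) :
    ∑ j ∈ range (P.natDegree + 1),
        (-1 : R) ^ (P.natDegree - j) * (P.natDegree.choose j : R) * P.eval (j : R) =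
      P.natDegree ! * P.leadingCoeff := by
  have h := congr_fun P.fwdDiff_iter_degree_eq_factorial 0
  rw [fwdDiff_iter_eq_sum_shift] at h
  simp only [Pi.smul_apply, smul_eq_mul, zero_add, nsmul_one, zsmul_eq_mul] at h
  push_cast at h
  rw [h, mul_comm]
  rfl

theorem prod_range_two_mul_add_odd {R : Type*} [CommRing R] (x : R) (n : ℕ) :
    ∏ i ∈ range (2 * n), (x + (2 * n - 1 - 2 * i : R)) =
      ∏ l ∈ range n, (x ^ 2 - (2 * l + 1 : R) ^ 2) := by
  induction n with
  | zero => simp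
  | succ n ih =>
    have shift : ∀ i : ℕ, x + (2 * (n + 1 : ℕ) - 1 - 2 * (i + 1 : ℕ) : R) =
        x + (2 * n - 1 - 2 * i : R) := fun i => by push_cast; ring
    rw [show 2 * (n + 1) = 2 * n + 1 + 1 by ring, prod_range_succ, prod_range_succ',
      prod_range_succ, ← ih]
    simp only [shift]
    push_cast
    ring

noncomputable def oddCentralPoly (R : Type*) [CommRing R] (n : ℕ) : R[X] :=
  X * ∏ l ∈ range n, (X ^ 2 - C ((2 * l + 1 : R) ^ 2))

section oddCentralPoly

variable {R : Type*} [CommRing R] (n : ℕ)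

theorem oddCentralPoly_eval (x : R) :
    (oddCentralPoly R n).eval x = x * ∏ l ∈ range n, (x ^ 2 - (2 * l + 1 : R) ^ 2) := by
  simp [oddCentralPoly, eval_prod]

theorem oddCentralPoly_eval_neg (x : R) :
    (oddCentralPoly R n).eval (-x) = -(oddCentralPoly R n).eval x := by
  simp only [oddCentralPoly_eval, neg_sq, neg_mul]

theorem oddCentralPoly_natDegree [Nontrivial R] : (oddCentralPoly R n).natDegree = 2 * n + 1 := by
  have hfactor (l : ℕ) : (X ^ 2 - C ((2 * l + 1 : R) ^ 2)).Monic :=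
    monic_X_pow_sub_C _ two_ne_zero
  rw [oddCentralPoly, monic_X.natDegree_mul (monic_prod_of_monic _ _ fun l _ => hfactor l),
    natDegree_prod_of_monic _ _ fun l _ => hfactor l]
  simp only [natDegree_X, natDegree_X_pow_sub_C, sum_const, card_range, smul_eq_mul]
  ring

theorem oddCentralPoly_monic : (oddCentralPoly R n).Monic :=
  monic_X.mul (monic_prod_of_monic _ _ fun _ _ => monic_X_pow_sub_C _ two_ne_zero)

end oddCentralPoly

section sum

variable {R : Type*} [CommRing R] [IsDomain R] [CharZero R] {m : R} (hm : m ≠ 0) (n : ℕ)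
include hm

theorem sum_alternating_choose_mul_oddCentralPoly_eval_two_mul_sub :
    ∑ j ∈ range (2 * n + 1 + 1), (-1 : R) ^ (2 * n + 1 - j) * ((2 * n + 1).choose j : R) *
        (oddCentralPoly R n).eval ((2 * j - (2 * n + 1)) * m) =
      (2 * n + 1)! * (2 * m) ^ (2 * n + 1) := by
  set Q := (oddCentralPoly R n).comp (C (2 * m) * X + C (-((2 * n + 1) * m)))
  have h2m : 2 * m ≠ 0 := mul_ne_zero two_ne_zero hm
  have hQdeg : Q.natDegree = 2 * n + 1 := by
    rw [natDegree_comp, natDegree_linear h2m, oddCentralPoly_natDegree, mul_one]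
  have hQlead : Q.leadingCoeff = (2 * m) ^ (2 * n + 1) := by
    rw [leadingCoeff_comp (by rw [natDegree_linear h2m]; exact one_ne_zero),
      (oddCentralPoly_monic n).leadingCoeff, one_mul, leadingCoeff_linear h2m,
      oddCentralPoly_natDegree]
  have hQeval (j : ℕ) :
      Q.eval (j : R) = (oddCentralPoly R n).eval ((2 * j - (2 * n + 1)) * m) := by
    simp only [Q, eval_comp, eval_add, eval_mul, eval_C, eval_X]
    congr 1
    ring
  simpa only [hQdeg, hQlead, hQeval] using sum_range_alternating_choose_mul_eval Q

theorem sum_alternating_choose_mul_oddCentralPoly_eval_two_mul_add_one :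
    ∑ s ∈ range (n + 1), (-1 : R) ^ (n - s) * ((2 * n + 1).choose (n - s) : R) *
        (oddCentralPoly R n).eval ((2 * s + 1) * m) =
      4 ^ n * (2 * n + 1)! * m ^ (2 * n + 1) := by
  have hupper : ∀ s ∈ range (n + 1), (-1 : R) ^ (2 * n + 1 - (n + 1 + s)) *
      ((2 * n + 1).choose (n + 1 + s) : R) *
      (oddCentralPoly R n).eval ((2 * (n + 1 + s : ℕ) - (2 * n + 1)) * m) =
      (-1 : R) ^ (n - s) * ((2 * n + 1).choose (n - s) : R) *
        (oddCentralPoly R n).eval ((2 * s + 1) * m) := by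
    intro s hs
    have hs : s ≤ n := Nat.lt_succ_iff.mp (mem_range.mp hs)
    rw [show 2 * n + 1 - (n + 1 + s) = n - s by omega,
      Nat.choose_symm_of_eq_add (show 2 * n + 1 = (n + 1 + s) + (n - s) by omega)]
    congr 3
    push_cast
    ring
  have hlower : ∀ s ∈ range (n + 1), (-1 : R) ^ (2 * n + 1 - (n + 1 - 1 - s)) *
      ((2 * n + 1).choose (n + 1 - 1 - s) : R) *
      (oddCentralPoly R n).eval ((2 * (n + 1 - 1 - s : ℕ) - (2 * n + 1)) * m) =
      (-1 : R) ^ (n - s) * ((2 * n + 1).choose (n - s) : R) *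
        (oddCentralPoly R n).eval ((2 * s + 1) * m) := by
    intro s hs
    have hs : s ≤ n := Nat.lt_succ_iff.mp (mem_range.mp hs)
    rw [show n + 1 - 1 - s = n - s by omega,
      show 2 * n + 1 - (n - s) = (n - s) + (2 * s + 1) by omega, pow_add,
      Odd.neg_one_pow (odd_two_mul_add_one s),
      show (2 * ((n - s : ℕ) : R) - (2 * n + 1)) * m = -((2 * s + 1) * m) by
        rw [Nat.cast_sub hs]; ring,
      oddCentralPoly_eval_neg]
    ring
  have hfull := sum_alternating_choose_mul_oddCentralPoly_eval_two_mul_sub hm n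
  rw [show 2 * n + 1 + 1 = (n + 1) + (n + 1) by omega, sum_range_add, ← sum_range_reflect,
    sum_congr rfl hlower, sum_congr rfl hupper, ← two_mul] at hfull
  apply mul_left_cancel₀ (two_ne_zero : (2 : R) ≠ 0)
  rw [hfull, mul_pow, pow_succ, pow_mul]
  norm_num
  ring

end sum

theorem mul_qchoose_eq_oddCentralPoly_eval (x : ℚ) (n : ℕ) :
    x * qchoose ((n : ℚ) - 1 / 2 + x / 2) (2 * n) =
      (oddCentralPoly ℚ n).eval x / (4 ^ n * (2 * n)!) := by
  have halve (i : ℕ) : (n : ℚ) - 1 / 2 + x / 2 - i = (x + (2 * n - 1 - 2 * i)) / 2 := by ring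
  rw [qchoose, oddCentralPoly_eval, ← prod_range_two_mul_add_odd,
    prod_congr rfl fun i _ => halve i, prod_div_distrib, prod_const, card_range, pow_mul]
  norm_num
  ring

theorem steinberg_even_identity_general (k n : ℕ) :
    ∑ s ∈ Finset.range (n + 1), (-1 : ℚ) ^ (n - s) *
        qchoose ((n : ℚ) - 1/2 + ((s : ℚ) + 1/2) * ((k : ℚ) + 1)) (2 * n) *
        (Nat.choose (2 * n + 1) (n - s) : ℚ) * ((2 * (s : ℚ) + 1) / (2 * (n : ℚ) + 1)) =
      ((k : ℚ) + 1) ^ (2 * n) := by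
  set m : ℚ := k + 1
  have hm : m ≠ 0 := by positivity
  have hterm : ∀ s ∈ range (n + 1), (-1 : ℚ) ^ (n - s) *
      qchoose ((n : ℚ) - 1/2 + ((s : ℚ) + 1/2) * m) (2 * n) *
      ((2 * n + 1).choose (n - s) : ℚ) * ((2 * (s : ℚ) + 1) / (2 * (n : ℚ) + 1)) =
      (-1 : ℚ) ^ (n - s) * ((2 * n + 1).choose (n - s) : ℚ) *
        (oddCentralPoly ℚ n).eval ((2 * s + 1) * m) /
          (m * (2 * n + 1) * (4 ^ n * (2 * n)!)) := by
    intro s _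
    have h := mul_qchoose_eq_oddCentralPoly_eval ((2 * s + 1) * m) n
    rw [eq_div_iff (by positivity)] at h
    rw [← h,
      show (n : ℚ) - 1/2 + ((s : ℚ) + 1/2) * m = n - 1 / 2 + (2 * s + 1) * m / 2 by ring]
    field_simp
  rw [sum_congr rfl hterm, ← sum_div,
    sum_alternating_choose_mul_oddCentralPoly_eval_two_mul_add_one hm, Nat.factorial_succ]
  push_cast
  field_simp
  ring

/-- For even `k` and any `n`,
`∑_{s=0}^{n} (-1)^{n-s} C(n-1/2+(s+1/2)(k+1), 2n) C(2n+1, n-s) (2s+1)/(2n+1) = (k+1)^{2n}`. -/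
theorem steinberg_even_identity (k n : ℕ) (hk : Even k) :
    ∑ s ∈ Finset.range (n + 1), (-1 : ℚ) ^ (n - s) *
        qchoose ((n : ℚ) - 1/2 + ((s : ℚ) + 1/2) * ((k : ℚ) + 1)) (2 * n) *
        (Nat.choose (2 * n + 1) (n - s) : ℚ) * ((2 * (s : ℚ) + 1) / (2 * (n : ℚ) + 1)) =
      ((k : ℚ) + 1) ^ (2 * n) :=
  steinberg_even_identity_general k n
end

section
/- For all positive integers n and nonnegative integers k, ∑_{s=1}^{n} (-1)^{n-s} · s · C(n + s(k+1) - 1, 2n-1) · C(2n, n-s) = n·(k+1)^{2n-1}, where C(a,b) is the ordinary binomial coefficient (with C(a,b)=0 if a<b). -/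
/-!
With `m = k + 1` and `n = c + 1`, consider `P(x) = x (m x + c) (m x + c - 1) ⋯ (m x - c)`.
Negating `x` sends the factor `m x + c - i` to `-(m x + c - (2c - i))`, so the product of the
`2n - 1` factors after `x` is odd and `P` is even; it has degree `2n` and leading coefficient `m^(2n-1)`, and `P(s) = s (2n-1)! C(n + s m - 1, 2n - 1)` for `s ∈ ℕ`.
Hence the `2n`-th forward difference of `P` at `-n` equals `(2n)! m^(2n-1)`. Expanding it as the
alternating binomial sum `∑_j (-1)^(2n-j) C(2n, j) P(j - n)` and folding the terms `j < n` onto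
`j > n` by evenness (the middle term vanishes since `P(0) = 0`) turns it into twice the sum in
the theorem, times `(2n-1)!`.
-/

open Finset Polynomial Nat

theorem descPochhammer_eval_sub_one_sub {R : Type*} [Ring R] (k : ℕ) (r : R) :
    (descPochhammer R k).eval ((k : R) - 1 - r) = (-1) ^ k * (descPochhammer R k).eval r := by
  rw [descPochhammer_eval_eq_ascPochhammer, ← ascPochhammer_eval_neg_eq_descPochhammer]
  congr 1
  abel

theorem fwdDiff_iter_two_mul_eq_two_nsmul_sum_of_even {G : Type*} [AddCommGroup G] {f : ℤ → G}
    (heven : ∀ x, f (-x) = f x) (hzero : f 0 = 0) (n : ℕ) :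
    (fwdDiff 1)^[2 * n] f (-n) =
      2 • ∑ s ∈ Icc 1 n, ((-1 : ℤ) ^ (n - s) * (2 * n).choose (n - s)) • f s := by
  set T : ℕ → G := fun s ↦ ((-1 : ℤ) ^ (n - s) * (2 * n).choose (n - s)) • f s
  set g : ℕ → G := fun j ↦ ((-1 : ℤ) ^ (2 * n - j) * (2 * n).choose j) • f (-n + j • 1)
  have lower : ∑ j ∈ range n, g j = ∑ s ∈ Icc 1 n, T s := by
    refine sum_nbij' (n - ·) (n - ·)
      (by intro j hj; simp only [mem_range, mem_Icc] at hj ⊢; omega)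
      (by intro s hs; simp only [mem_range, mem_Icc] at hs ⊢; omega)
      (by intro j hj; simp only [mem_range] at hj; omega)
      (by intro s hs; simp only [mem_Icc] at hs; omega) fun j hj ↦ ?_
    simp only [mem_range] at hj
    have hsign : 2 * n - j = (n - (n - j)) + 2 * (n - j) := by omega
    have harg : -(n : ℤ) + j • 1 = -((n - j : ℕ) : ℤ) := by
      push_cast [Nat.cast_sub hj.le]
      ring
    simp only [g, T, hsign, harg, heven, Nat.sub_sub_self hj.le, pow_add, pow_mul, neg_one_sq,
      one_pow, mul_one]
  have upper : ∑ j ∈ Ico (n + 1) (2 * n + 1), g j = ∑ s ∈ Icc 1 n, T s := by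
    refine sum_nbij' (· - n) (n + ·)
      (by intro j hj; simp only [mem_Ico, mem_Icc] at hj ⊢; omega)
      (by intro s hs; simp only [mem_Ico, mem_Icc] at hs ⊢; omega)
      (by intro j hj; simp only [mem_Ico] at hj; omega)
      (by intro s hs; simp only [mem_Icc] at hs; omega) fun j hj ↦ ?_
    simp only [mem_Ico] at hj
    have hsign : 2 * n - j = n - (j - n) := by omega
    have hchoose : (2 * n).choose j = (2 * n).choose (n - (j - n)) :=
      Nat.choose_symm_of_eq_add (by omega)
    have harg : -(n : ℤ) + j • 1 = ((j - n : ℕ) : ℤ) := by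
      push_cast [Nat.cast_sub (by omega : n ≤ j)]
      ring
    simp only [g, T, hsign, hchoose, harg]
  rw [fwdDiff_iter_eq_sum_shift, ← sum_range_add_sum_Ico _ (by omega : n + 1 ≤ 2 * n + 1),
    sum_range_succ]
  change ∑ j ∈ range n, g j + g n + ∑ j ∈ Ico (n + 1) (2 * n + 1), g j = _
  rw [lower, upper, two_nsmul]
  simp [g, hzero]

/-- Divided by `(2c+1)!`, its value at `s` is the `s`-th summand of the theorem without its
sign and `C(2n, n - s)`, for `n = c + 1` and `m = k + 1`. -/
noncomputable def steinbergPoly (c : ℕ) (m : ℤ) : ℤ[X] :=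
  X * (descPochhammer ℤ (2 * c + 1)).comp (C m * X + C (c : ℤ))

section steinbergPoly

variable (c : ℕ)

theorem steinbergPoly_eval (m x : ℤ) :
    (steinbergPoly c m).eval x = x * (descPochhammer ℤ (2 * c + 1)).eval (m * x + c) := by
  simp [steinbergPoly, eval_comp]

theorem steinbergPoly_eval_neg (m x : ℤ) :
    (steinbergPoly c m).eval (-x) = (steinbergPoly c m).eval x := by
  have h := descPochhammer_eval_sub_one_sub (2 * c + 1) (m * x + c)
  rw [Odd.neg_one_pow (odd_two_mul_add_one c)] at h
  rw [steinbergPoly_eval, steinbergPoly_eval,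
    show m * -x + c = ((2 * c + 1 : ℕ) : ℤ) - 1 - (m * x + c) by push_cast; ring, h]
  ring

theorem steinbergPoly_eval_zero (m : ℤ) : (steinbergPoly c m).eval 0 = 0 := by
  simp [steinbergPoly_eval]

theorem steinbergPoly_eval_natCast (a s : ℕ) :
    (steinbergPoly c a).eval (s : ℤ) = s * (2 * c + 1)! * (s * a + c).choose (2 * c + 1) := by
  rw [steinbergPoly_eval, mul_comm (a : ℤ), ← Nat.cast_mul, ← Nat.cast_add,
    descPochhammer_eval_eq_descFactorial, Nat.descFactorial_eq_factorial_mul_choose]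
  push_cast
  ring

variable {m : ℤ}

theorem steinbergPoly_natDegree (hm : m ≠ 0) : (steinbergPoly c m).natDegree = 2 * c + 2 := by
  have hcomp :
      ((descPochhammer ℤ (2 * c + 1)).comp (C m * X + C (c : ℤ))).natDegree = 2 * c + 1 := by
    rw [natDegree_comp, descPochhammer_natDegree, natDegree_linear hm, mul_one]
  rw [steinbergPoly, natDegree_mul X_ne_zero (ne_zero_of_natDegree_gt (n := 0) (by omega)),
    natDegree_X, hcomp]
  ring

theorem steinbergPoly_leadingCoeff (hm : m ≠ 0) :
    (steinbergPoly c m).leadingCoeff = m ^ (2 * c + 1) := by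
  rw [steinbergPoly, leadingCoeff_mul, leadingCoeff_X, one_mul,
    leadingCoeff_comp (by rw [natDegree_linear hm]; exact one_ne_zero),
    (monic_descPochhammer ℤ _).leadingCoeff, leadingCoeff_linear hm, descPochhammer_natDegree,
    one_mul]

theorem sum_steinbergPoly_eval (hm : m ≠ 0) :
    ∑ s ∈ Icc 1 (c + 1), (-1 : ℤ) ^ (c + 1 - s) * (2 * (c + 1)).choose (c + 1 - s) *
        (steinbergPoly c m).eval (s : ℤ) = (c + 1) * (2 * c + 1)! * m ^ (2 * c + 1) := by
  have hdiff : (fwdDiff 1)^[2 * (c + 1)] (steinbergPoly c m).eval (-(c + 1 : ℕ)) =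
      m ^ (2 * c + 1) * (2 * c + 2)! := by
    rw [show 2 * (c + 1) = (steinbergPoly c m).natDegree by rw [steinbergPoly_natDegree c hm]; ring,
      fwdDiff_iter_degree_eq_factorial, steinbergPoly_leadingCoeff c hm,
      steinbergPoly_natDegree c hm]
    simp
  rw [fwdDiff_iter_two_mul_eq_two_nsmul_sum_of_even (steinbergPoly_eval_neg c m)
    (steinbergPoly_eval_zero c m), nsmul_eq_mul, Nat.factorial_succ] at hdiff
  simp only [smul_eq_mul] at hdiff
  push_cast at hdiff
  refine mul_left_cancel₀ (two_ne_zero (α := ℤ)) ?_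
  linear_combination hdiff

end steinbergPoly

/-- For `n ≥ 1` and `k ∈ ℕ`,
`∑_{s=1}^{n} (-1)^{n-s} s C(n+s(k+1)-1, 2n-1) C(2n, n-s) = n (k+1)^{2n-1}`,
where `C` is the ordinary binomial coefficient (zero when the top is smaller). -/
theorem steinberg_even_orthogonal_identity (n k : ℕ) (hn : 1 ≤ n) :
    ∑ s ∈ Finset.Icc 1 n, (-1 : ℤ) ^ (n - s) * (s : ℤ) *
        (Nat.choose (n + s * (k + 1) - 1) (2 * n - 1) : ℤ) *
        (Nat.choose (2 * n) (n - s) : ℤ) =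
      (n : ℤ) * ((k : ℤ) + 1) ^ (2 * n - 1) := by
  obtain ⟨c, rfl⟩ := Nat.exists_eq_add_of_le' hn
  have hdeg : 2 * (c + 1) - 1 = 2 * c + 1 := by omega
  refine mul_left_cancel₀ (by positivity : ((2 * c + 1)! : ℤ) ≠ 0) ?_
  calc _ = ∑ s ∈ Icc 1 (c + 1), (-1 : ℤ) ^ (c + 1 - s) * (2 * (c + 1)).choose (c + 1 - s) *
        (steinbergPoly c (k + 1 : ℕ)).eval (s : ℤ) := by
        rw [mul_sum]
        refine sum_congr rfl fun s _ ↦ ?_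
        rw [steinbergPoly_eval_natCast, hdeg,
          show c + 1 + s * (k + 1) - 1 = s * (k + 1) + c by omega]
        ring
    _ = (c + 1) * (2 * c + 1)! * ((k + 1 : ℕ) : ℤ) ^ (2 * c + 1) :=
        sum_steinbergPoly_eval c (by positivity)
    _ = _ := by push_cast [hdeg]; ring
end

section
/- For the root system B_n with positive roots Φ⁺ = {ε_i, ε_j ± ε_i : 1 ≤ i < j ≤ n, 1 ≤ r ≤ n}, ρ = (1/2)∑_{i=1}^n (2i-1)ε_i, and weight λ_s = ∑_{i=1}^s (i-1/2)k·ε_i + ∑_{i=s+1}^n ((i+1/2)k+1)·ε_i (for 0 ≤ s ≤ n and k ∈ ℕ), the Weyl dimension product ∏_{α∈Φ⁺}(λ_s+ρ,α)/(ρ,α) equals C(2n+1, n-s)·(k+1)^{n²}. -/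
/-!
Put `x = λ_s + ρ`. Then `x_i = (k + 1) ρ_{σ i}`, where `σ` enumerates `{1, …, n + 1} ∖ {s + 1}`
increasingly, and the Weyl product is `W x / W ρ` for `W x = ∏_j x_j ∏_{i<j} (x_j² - x_i²)`.
Since `W` is homogeneous of degree `n²`, the factor `(k + 1)^{n²}` splits off, and `W (ρ ∘ σ) / W ρ`
is computed by induction on `n ≥ s`: the last row of `ρ ∘ σ` is the last row of `ρ` in rank `n + 1`
with the factor `ρ_{n+2}² - ρ_{s+1}² = (n + 1 - s)(n + s + 2)` removed, and
`2 ρ_{n+1} ∏_{i ≤ n} (ρ_{n+1}² - ρ_i²) = (2n + 1)!`. What is left is the ratio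
`C(2n + 3, n + 1 - s) / C(2n + 1, n - s)`.
-/

/-- Weyl dimension product for the root system `B_n` with positive roots
`{ε_i, ε_j ± ε_i}` and `ρ = (1/2)∑(2i-1)ε_i`, evaluated at the weight `∑ ν_i ε_i`:
`∏_{α∈Φ⁺}(ν+ρ,α)/(ρ,α)`. -/
noncomputable def dimB (n : ℕ) (ν : ℕ → ℚ) : ℚ :=
  (∏ p ∈ (Finset.Icc 1 n ×ˢ Finset.Icc 1 n).filter (fun p => p.1 < p.2),
      (((ν p.2 + (p.2 : ℚ) - 1/2) - (ν p.1 + (p.1 : ℚ) - 1/2)) *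
        ((ν p.2 + (p.2 : ℚ) - 1/2) + (ν p.1 + (p.1 : ℚ) - 1/2))) /
      ((((p.2 : ℚ) - 1/2) - ((p.1 : ℚ) - 1/2)) *
        (((p.2 : ℚ) - 1/2) + ((p.1 : ℚ) - 1/2)))) *
  ∏ i ∈ Finset.Icc 1 n, (ν i + (i : ℚ) - 1/2) / ((i : ℚ) - 1/2)

/-- Weyl dimension product for the root system `D_n` with positive roots
`{ε_j ± ε_i : i < j}` and `ρ = ∑(i-1)ε_i`, evaluated at the weight `∑ ν_i ε_i`. -/
noncomputable def dimD (n : ℕ) (ν : ℕ → ℚ) : ℚ :=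
  ∏ p ∈ (Finset.Icc 1 n ×ˢ Finset.Icc 1 n).filter (fun p => p.1 < p.2),
      (((ν p.2 + (p.2 : ℚ) - 1) - (ν p.1 + (p.1 : ℚ) - 1)) *
        ((ν p.2 + (p.2 : ℚ) - 1) + (ν p.1 + (p.1 : ℚ) - 1))) /
      ((((p.2 : ℚ)) - (p.1 : ℚ)) * (((p.2 : ℚ) - 1) + ((p.1 : ℚ) - 1)))

open Finset
open scoped Nat

def rhoB (i : ℕ) : ℚ := i - 1 / 2

def weylProdB (n : ℕ) (x : ℕ → ℚ) : ℚ :=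
  ∏ j ∈ Icc 1 n, x j * ∏ i ∈ Ico 1 j, (x j ^ 2 - x i ^ 2)

lemma prod_filter_lt_eq_prod_Icc_Ico {M : Type*} [CommMonoid M] (n : ℕ) (f : ℕ × ℕ → M) :
    ∏ p ∈ (Icc 1 n ×ˢ Icc 1 n).filter (fun p => p.1 < p.2), f p =
      ∏ j ∈ Icc 1 n, ∏ i ∈ Ico 1 j, f (i, j) := by
  apply prod_finset_product_right
  rintro ⟨i, j⟩
  simp only [mem_filter, mem_product, mem_Icc, mem_Ico]
  omega

lemma dimB_eq_weylProdB_div (n : ℕ) (ν : ℕ → ℚ) :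
    dimB n ν = weylProdB n (fun i => ν i + rhoB i) / weylProdB n rhoB := by
  rw [dimB, prod_filter_lt_eq_prod_Icc_Ico, ← prod_mul_distrib, weylProdB, weylProdB,
    ← prod_div_distrib]
  refine prod_congr rfl fun j _ => ?_
  rw [mul_div_mul_comm, ← prod_div_distrib, mul_comm]
  congr 1
  · simp only [rhoB]; ring
  · exact prod_congr rfl fun i _ => by simp only [rhoB]; ring

lemma weylProdB_succ (n : ℕ) (x : ℕ → ℚ) :
    weylProdB (n + 1) x =
      weylProdB n x * (x (n + 1) * ∏ i ∈ Icc 1 n, (x (n + 1) ^ 2 - x i ^ 2)) := by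
  rw [weylProdB, prod_Icc_succ_top (by omega), Ico_add_one_right_eq_Icc, weylProdB]

lemma weylProdB_congr {n : ℕ} {x y : ℕ → ℚ} (h : ∀ i ∈ Icc 1 n, x i = y i) :
    weylProdB n x = weylProdB n y := by
  refine prod_congr rfl fun j hj => ?_
  rw [h j hj]
  refine congrArg _ (prod_congr rfl fun i hi => ?_)
  rw [h i (mem_Icc.mpr (by simp only [mem_Ico, mem_Icc] at hi hj; omega))]

lemma weylProdB_const_mul (n : ℕ) (c : ℚ) (x : ℕ → ℚ) :
    weylProdB n (fun i => c * x i) = c ^ (n ^ 2) * weylProdB n x := by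
  induction n with
  | zero => simp [weylProdB]
  | succ n ih =>
    have hfactor : ∀ i ∈ Icc 1 n, (c * x (n + 1)) ^ 2 - (c * x i) ^ 2 =
        c ^ 2 * (x (n + 1) ^ 2 - x i ^ 2) := fun i _ => by ring
    rw [weylProdB_succ, weylProdB_succ, ih, prod_congr rfl hfactor, prod_mul_distrib, prod_const,
      Nat.card_Icc, Nat.add_sub_cancel]
    ring

lemma weylProdB_rhoB_pos (n : ℕ) : 0 < weylProdB n rhoB := by
  refine prod_pos fun j hj => mul_pos ?_ (prod_pos fun i hi => ?_)
  · have : (1 : ℚ) ≤ j := by exact_mod_cast (mem_Icc.mp hj).1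
    simp only [rhoB]; linarith
  · have hi1 : (1 : ℚ) ≤ i := by exact_mod_cast (mem_Ico.mp hi).1
    have hij : (i : ℚ) < j := by exact_mod_cast (mem_Ico.mp hi).2
    simp only [rhoB]; nlinarith

lemma prod_Icc_ite_mul {M : Type*} [CommMonoid M] (g : ℕ → M) {s n : ℕ} (hs : s ≤ n) :
    (∏ i ∈ Icc 1 n, g (if i ≤ s then i else i + 1)) * g (s + 1) = ∏ i ∈ Icc 1 (n + 1), g i := by
  induction n, hs using Nat.le_induction with
  | base =>
    rw [prod_Icc_succ_top (by omega)]
    exact congrArg (· * g (s + 1)) (prod_congr rfl fun i hi => by rw [if_pos (mem_Icc.mp hi).2])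
  | succ n hsn ih =>
    rw [prod_Icc_succ_top (by omega), if_neg (by omega), mul_right_comm, ih,
      ← prod_Icc_succ_top (by omega : 1 ≤ n + 1 + 1)]

lemma factorial_mul_prod_rhoB_sq_sub (t n : ℕ) :
    (t ! : ℚ) * ∏ i ∈ Icc 1 n, (rhoB (t + n + 1) ^ 2 - rhoB i ^ 2) = (t + 2 * n)! := by
  induction n generalizing t with
  | zero => simp
  | succ n ih =>
    have hlast : rhoB (t + (n + 1) + 1) ^ 2 - rhoB (n + 1) ^ 2 = (t + 1) * (t + 2 * n + 2) := by
      simp only [rhoB]; push_cast; ring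
    have ih' := ih (t + 1)
    rw [show t + 1 + n + 1 = t + (n + 1) + 1 by omega, show t + 1 + 2 * n = t + 2 * n + 1 by omega,
      Nat.factorial_succ t] at ih'
    rw [prod_Icc_succ_top (by omega), hlast, show t + 2 * (n + 1) = t + 2 * n + 1 + 1 by omega,
      Nat.factorial_succ (t + 2 * n + 1), Nat.cast_mul, ← ih']
    push_cast
    ring

lemma two_mul_rhoB_mul_prod (n : ℕ) :
    2 * (rhoB (n + 1) * ∏ i ∈ Icc 1 n, (rhoB (n + 1) ^ 2 - rhoB i ^ 2)) = (2 * n + 1)! := by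
  have h := factorial_mul_prod_rhoB_sq_sub 0 n
  rw [zero_add, zero_add, Nat.factorial_zero, Nat.cast_one, one_mul] at h
  rw [Nat.factorial_succ, Nat.cast_mul, ← h, rhoB]
  push_cast
  ring

lemma two_mul_rhoB_mul_prod_skip {s n : ℕ} (hs : s ≤ n) :
    2 * (rhoB (n + 1 + 1) *
        ∏ i ∈ Icc 1 n, (rhoB (n + 1 + 1) ^ 2 - rhoB (if i ≤ s then i else i + 1) ^ 2)) *
      (((n : ℚ) - s + 1) * (n + s + 2)) = (2 * n + 3)! := by
  have hgap : rhoB (n + 1 + 1) ^ 2 - rhoB (s + 1) ^ 2 = ((n : ℚ) - s + 1) * (n + s + 2) := by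
    simp only [rhoB]; push_cast; ring
  rw [← hgap, mul_assoc, mul_assoc, prod_Icc_ite_mul (fun j => rhoB (n + 1 + 1) ^ 2 - rhoB j ^ 2) hs]
  exact two_mul_rhoB_mul_prod (n + 1)

lemma choose_two_mul_add_three_mul (n t : ℕ) :
    (2 * n + 3).choose (t + 1) * ((t + 1) * (2 * n + 2 - t)) =
      (2 * n + 1).choose t * ((2 * n + 2) * (2 * n + 3)) := by
  calc (2 * n + 3).choose (t + 1) * ((t + 1) * (2 * n + 2 - t))
      = (2 * n + 3) * ((2 * n + 2).choose t * (2 * n + 2 - t)) := by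
        rw [← mul_assoc, ← Nat.add_one_mul_choose_eq]; ring
    _ = (2 * n + 1).choose t * ((2 * n + 2) * (2 * n + 3)) := by
        rw [← Nat.choose_mul_succ_eq]; ring

lemma weylProdB_rhoB_skip {s n : ℕ} (hs : s ≤ n) :
    weylProdB n (fun i => rhoB (if i ≤ s then i else i + 1)) =
      (2 * n + 1).choose (n - s) * weylProdB n rhoB := by
  induction n, hs using Nat.le_induction with
  | base =>
    rw [Nat.sub_self, Nat.choose_zero_right, Nat.cast_one, one_mul]
    exact weylProdB_congr fun i hi => by rw [if_pos (mem_Icc.mp hi).2]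
  | succ n hsn ih =>
    have hgap_pos : 0 < ((n : ℚ) - s + 1) * (n + s + 2) := by
      have : (s : ℚ) ≤ n := by exact_mod_cast hsn
      positivity
    have hchoose : ((2 * n + 3).choose (n - s + 1) : ℚ) * (((n : ℚ) - s + 1) * (n + s + 2)) =
        (2 * n + 1).choose (n - s) * ((2 * n + 2) * (2 * n + 3)) := by
      have h := choose_two_mul_add_three_mul n (n - s)
      rw [show 2 * n + 2 - (n - s) = n + s + 2 by omega] at h
      exact_mod_cast h
    have hlast := two_mul_rhoB_mul_prod_skip hsn
    have hρ := two_mul_rhoB_mul_prod n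
    rw [show 2 * n + 3 = 2 * n + 1 + 1 + 1 by omega, Nat.factorial_succ, Nat.factorial_succ] at hlast
    push_cast at hlast
    rw [weylProdB_succ, weylProdB_succ, ih, if_neg (by omega),
      show 2 * (n + 1) + 1 = 2 * n + 3 by omega, show n + 1 - s = n - s + 1 by omega]
    apply mul_right_cancel₀ (mul_ne_zero two_ne_zero hgap_pos.ne')
    linear_combination ((2 * n + 1).choose (n - s) : ℚ) * weylProdB n rhoB * hlast
      - ((n : ℚ) - s + 1) * (n + s + 2) * ((2 * n + 3).choose (n - s + 1) : ℚ) *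
          weylProdB n rhoB * hρ
      - weylProdB n rhoB * ((2 * n + 1)! : ℚ) * hchoose

/-- For `B_n`, the weight `λ_s = ∑_{i≤s}(i-1/2)k ε_i + ∑_{i>s}((i+1/2)k+1) ε_i`
has Weyl dimension product `C(2n+1, n-s)(k+1)^{n²}`. -/
theorem weyl_dim_Bn_steinberg_intermediate (n s k : ℕ) (hs : s ≤ n) :
    dimB n (fun i => if i ≤ s then ((i : ℚ) - 1/2) * k else ((i : ℚ) + 1/2) * k + 1) =
      (Nat.choose (2 * n + 1) (n - s) : ℚ) * ((k : ℚ) + 1) ^ (n ^ 2) := by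
  have hweight : (fun i : ℕ => (if i ≤ s then ((i : ℚ) - 1/2) * k else ((i : ℚ) + 1/2) * k + 1)
      + rhoB i) = fun i => ((k : ℚ) + 1) * rhoB (if i ≤ s then i else i + 1) := by
    funext i
    split_ifs <;> simp only [rhoB] <;> push_cast <;> ring
  rw [dimB_eq_weylProdB_div, hweight, weylProdB_const_mul, weylProdB_rhoB_skip hs,
    mul_div_assoc, mul_div_assoc, div_self (weylProdB_rhoB_pos n).ne', mul_one, mul_comm]
end

section
/- For the root system D_n with positive roots Φ⁺ = {ε_j ± ε_i : 1 ≤ i < j ≤ n}, ρ = ∑_{i=2}^n (i-1)ε_i, and weight λ_s = ∑_{i=1}^s (i-1)k·ε_i + ∑_{i=s+1}^n (ik+1)·ε_i (for 1 ≤ s ≤ n and k ∈ ℕ), the Weyl dimension product ∏_{α∈Φ⁺}(λ_s+ρ,α)/(ρ,α) equals C(2n, n-s)·(k+1)^{n²-n}. -/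
/-! Writing `x = λ + ρ`, the Weyl product is `∏_{i<j} (x_j² - x_i²) / (ρ_j² - ρ_i²)`. Since
`λ_s + ρ = (k+1)(ω + ρ)` for `ω = ε_{s+1} + ⋯ + ε_n`, the product for `λ_s` is `(k+1)^{n²-n}` times
the one for `ω`, which is `C(2n, n-s)`. The latter goes by induction on `n`: the factors with
`j = n+1` multiply the product by `2(n+1)(2n+1) / ((n+1-s)(n+1+s)) = C(2n+2, n+1-s) / C(2n, n-s)`,
because those with `i ≤ s` and those with `i > s` telescope separately. -/

open Finset

theorem prod_Ico_div_of_ne_zero {G₀ : Type*} [CommGroupWithZero G₀] (f : ℕ → G₀) {m n : ℕ}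
    (hmn : m ≤ n) (hf : ∀ i ∈ Icc m n, f i ≠ 0) :
    ∏ i ∈ Ico m n, f (i + 1) / f i = f n / f m := by
  induction n, hmn using Nat.le_induction with
  | base => simp [div_self (hf m (by simp))]
  | succ n hmn ih =>
    rw [prod_Ico_succ_top hmn, ih fun i hi => hf i (Icc_subset_Icc_right n.le_succ hi),
      mul_comm, div_mul_div_cancel₀ (hf n (by simp [hmn]))]

theorem Nat.choose_add_two_succ_mul (N m : ℕ) :
    (N + 2).choose (m + 1) * ((m + 1) * (N + 1 - m)) = N.choose m * ((N + 1) * (N + 2)) := by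
  rw [← mul_assoc, ← Nat.add_one_mul_choose_eq, mul_assoc, ← Nat.choose_mul_succ_eq]
  ring

theorem dimD_eq_prod_range (n : ℕ) (ν : ℕ → ℚ) :
    dimD n ν = ∏ j ∈ range n, ∏ i ∈ range j,
      ((ν (j + 1) + j) ^ 2 - (ν (i + 1) + i) ^ 2) / ((j : ℚ) ^ 2 - (i : ℚ) ^ 2) := by
  rw [dimD, prod_sigma']
  symm
  refine prod_nbij' (fun q => (q.2 + 1, q.1 + 1)) (fun p => ⟨p.2 - 1, p.1 - 1⟩)
    ?_ ?_ ?_ ?_ ?_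
  · simp only [mem_sigma, mem_range, mem_filter, mem_product, mem_Icc]
    omega
  · simp only [mem_sigma, mem_range, mem_filter, mem_product, mem_Icc]
    omega
  · simp
  · rintro ⟨i, j⟩ hp
    simp only [mem_filter, mem_product, mem_Icc] at hp
    ext <;> simp <;> omega
  · intro q _
    push_cast
    congr 1 <;> ring

theorem dimD_succ (n : ℕ) (ν : ℕ → ℚ) :
    dimD (n + 1) ν = dimD n ν * ∏ m ∈ range n,
      ((ν (n + 1) + n) ^ 2 - (ν (m + 1) + m) ^ 2) / ((n : ℚ) ^ 2 - (m : ℚ) ^ 2) := by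
  rw [dimD_eq_prod_range, dimD_eq_prod_range, prod_range_succ]

theorem dimD_eq_one {n : ℕ} {ν : ℕ → ℚ} (h : ∀ i ∈ Icc 1 n, ν i = 0) : dimD n ν = 1 := by
  refine prod_eq_one fun p hp => ?_
  simp only [mem_filter, mem_product, mem_Icc] at hp
  have hlt : (p.1 : ℚ) < p.2 := by exact_mod_cast hp.2
  have hone : (1 : ℚ) ≤ p.1 := by exact_mod_cast hp.1.1.1
  have hden : ((p.2 : ℚ) - p.1) * ((p.2 - 1) + (p.1 - 1)) ≠ 0 :=
    (mul_pos (by linarith) (by linarith)).ne'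
  rw [h p.1 (mem_Icc.2 hp.1.1), h p.2 (mem_Icc.2 hp.1.2), div_eq_one_iff_eq hden]
  ring

theorem dimD_eq_pow_mul_of_shift (n : ℕ) (c : ℚ) {ν ν' : ℕ → ℚ}
    (h : ∀ i : ℕ, ν' i + i - 1 = c * (ν i + i - 1)) :
    dimD n ν' = c ^ (n ^ 2 - n) * dimD n ν := by
  have h' (m : ℕ) : ν' (m + 1) + m = c * (ν (m + 1) + m) := by
    simpa only [Nat.cast_add, Nat.cast_one, add_sub_assoc, sub_self, add_zero] using h (m + 1)
  induction n with
  | zero => simp [dimD]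
  | succ n ih =>
    have hexp : (n + 1) ^ 2 - (n + 1) = (n ^ 2 - n) + 2 * n := by
      have := Nat.le_self_pow two_ne_zero n
      simp only [add_sq, one_pow, mul_one]
      omega
    have hcol : ∀ m ∈ range n,
        ((ν' (n + 1) + n) ^ 2 - (ν' (m + 1) + m) ^ 2) / ((n : ℚ) ^ 2 - (m : ℚ) ^ 2) =
          c ^ 2 * (((ν (n + 1) + n) ^ 2 - (ν (m + 1) + m) ^ 2) / ((n : ℚ) ^ 2 - (m : ℚ) ^ 2)) :=
      fun m _ => by rw [h', h']; ring
    rw [dimD_succ, dimD_succ, ih, prod_congr rfl hcol, prod_mul_distrib, prod_const, card_range,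
      hexp, pow_add, pow_mul]
    ring

/-- `m ↦ if m < s then m else m + 1` lists the coordinates of `ω + ρ` for
`ω = ε_{s+1} + ⋯ + ε_n`, 0-indexed. -/
theorem prod_range_gap_column {n s : ℕ} (hsn : s ≤ n) (hn : n ≠ 0) :
    ∏ m ∈ range n, (((n : ℚ) + 1) ^ 2 - (if m < s then (m : ℚ) else m + 1) ^ 2) /
        ((n : ℚ) ^ 2 - (m : ℚ) ^ 2) =
      2 * ((n : ℚ) + 1) * (2 * n + 1) / ((n + 1 - s) * (n + 1 + s)) := by
  have hn' : (1 : ℚ) ≤ n := by exact_mod_cast Nat.one_le_iff_ne_zero.2 hn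
  have hsn' : (s : ℚ) ≤ n := by exact_mod_cast hsn
  set F : ℕ → ℚ := fun m => (n + m) / (n + 1 - m) with hF
  set G : ℕ → ℚ := fun m => (n + m) * (n + m + 1) with hG
  have hlow : ∀ m ∈ range s, (((n : ℚ) + 1) ^ 2 - (if m < s then (m : ℚ) else m + 1) ^ 2) /
      ((n : ℚ) ^ 2 - (m : ℚ) ^ 2) = F (m + 1) / F m := by
    intro m hm
    have hms : (m : ℚ) + 1 ≤ s := by exact_mod_cast mem_range.1 hm
    rw [if_pos (mem_range.1 hm), hF]
    push_cast
    have h0 : (n : ℚ) ^ 2 - m ^ 2 ≠ 0 := ne_of_gt (by nlinarith)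
    have h2 : (n : ℚ) + 1 - m ≠ 0 := by linarith
    have h3 : (n : ℚ) + m ≠ 0 := by positivity
    have h4 : (n : ℚ) + 1 - (m + 1) ≠ 0 := by linarith
    field_simp
    ring
  have hhigh : ∀ m ∈ Ico s n, (((n : ℚ) + 1) ^ 2 - (if m < s then (m : ℚ) else m + 1) ^ 2) /
      ((n : ℚ) ^ 2 - (m : ℚ) ^ 2) = G (m + 1) / G m := by
    intro m hm
    have hmn : (m : ℚ) + 1 ≤ n := by exact_mod_cast (mem_Ico.1 hm).2
    rw [if_neg (mem_Ico.1 hm).1.not_gt, hG]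
    push_cast
    have h0 : (n : ℚ) ^ 2 - m ^ 2 ≠ 0 := ne_of_gt (by nlinarith)
    have h3 : (n : ℚ) + m ≠ 0 := by positivity
    have h5 : (n : ℚ) + m + 1 ≠ 0 := by positivity
    field_simp
    ring
  have hFne : ∀ i ∈ Icc 0 s, F i ≠ 0 := by
    intro i hi
    have : (i : ℚ) ≤ s := by exact_mod_cast (mem_Icc.1 hi).2
    exact div_ne_zero (by positivity) (by linarith)
  have hGne : ∀ i ∈ Icc s n, G i ≠ 0 := fun i _ => by positivity
  rw [← prod_range_mul_prod_Ico _ hsn, prod_congr rfl hlow, prod_congr rfl hhigh, range_eq_Ico,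
    prod_Ico_div_of_ne_zero F s.zero_le hFne, prod_Ico_div_of_ne_zero G hsn hGne, hF, hG]
  have h1 : (n : ℚ) + 1 - s ≠ 0 := by linarith
  have h2 : (n : ℚ) + s ≠ 0 := by positivity
  simp only [Nat.cast_zero, add_zero, sub_zero]
  field_simp
  ring

/-- `ε_{s+1} + ⋯ + ε_n` is the highest weight of `Λ^{n-s} ℂ^{2n}`, of dimension `C(2n, n-s)`. -/
theorem dimD_exteriorPower_weight {n s : ℕ} (hs1 : 1 ≤ s) (hsn : s ≤ n) :
    dimD n (fun i => if i ≤ s then 0 else 1) = (2 * n).choose (n - s) := by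
  induction n, hsn using Nat.le_induction with
  | base =>
    rw [Nat.sub_self, Nat.choose_zero_right, Nat.cast_one]
    exact dimD_eq_one fun i hi => if_pos (mem_Icc.1 hi).2
  | succ n hsn ih =>
    have hcol : ∀ m ∈ range n,
        (((if n + 1 ≤ s then 0 else 1) + n) ^ 2 - ((if m + 1 ≤ s then 0 else 1) + m) ^ 2) /
            ((n : ℚ) ^ 2 - (m : ℚ) ^ 2) =
          (((n : ℚ) + 1) ^ 2 - (if m < s then (m : ℚ) else m + 1) ^ 2) /
            ((n : ℚ) ^ 2 - (m : ℚ) ^ 2) := by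
      intro m _
      simp only [show ¬(n + 1 ≤ s) by omega, Nat.add_one_le_iff, if_false]
      split_ifs <;> ring
    rw [dimD_succ, ih, prod_congr rfl hcol, prod_range_gap_column hsn (by omega)]
    have hchoose := Nat.choose_add_two_succ_mul (2 * n) (n - s)
    rw [show 2 * n + 1 - (n - s) = n + s + 1 by omega] at hchoose
    have hchooseQ : ((2 * n + 2).choose (n - s + 1) : ℚ) * ((n - s + 1) * (n + s + 1)) =
        (2 * n).choose (n - s) * ((2 * n + 1) * (2 * n + 2)) := by
      exact_mod_cast hchoose
    have hsn' : (s : ℚ) ≤ n := by exact_mod_cast hsn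
    have hden : ((n : ℚ) + 1 - s) * (n + 1 + s) ≠ 0 := (mul_pos (by linarith) (by positivity)).ne'
    rw [show 2 * (n + 1) = 2 * n + 2 by ring, show n + 1 - s = n - s + 1 by omega, mul_div_assoc',
      div_eq_iff hden]
    linear_combination -hchooseQ

/-- For `D_n`, the weight `λ_s = ∑_{i≤s}(i-1)k ε_i + ∑_{i>s}(ik+1) ε_i`
has Weyl dimension product `C(2n, n-s)(k+1)^{n²-n}`. -/
theorem weyl_dim_Dn_steinberg_intermediate (n s k : ℕ) (hs1 : 1 ≤ s) (hs : s ≤ n) :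
    dimD n (fun i => if i ≤ s then ((i : ℚ) - 1) * k else (i : ℚ) * k + 1) =
      (Nat.choose (2 * n) (n - s) : ℚ) * ((k : ℚ) + 1) ^ (n ^ 2 - n) := by
  have hshift (i : ℕ) : (if i ≤ s then ((i : ℚ) - 1) * k else (i : ℚ) * k + 1) + i - 1 =
      (k + 1) * ((if i ≤ s then 0 else 1) + i - 1) := by
    split_ifs <;> ring
  rw [dimD_eq_pow_mul_of_shift n _ hshift, dimD_exteriorPower_weight hs1 hs, mul_comm]
end

section
/- Products over rectangular index sets: for 0 ≤ s ≤ n and positive integer k, ∏_{1≤i≤s, s+1≤j≤n} [(j-i+1)(j+i)(k+1)²]/[(j-i)(j+i-1)] = (n+s)!·(k+1)^{2s(n-s)} / ((n-s)!·(2s)!). -/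
/-- Column product lemma: telescoping product over `i ∈ [1,s]` for column `j = n+1`. -/
lemma col_prod (n s k : ℕ) (hs : s ≤ n) :
    ∏ i ∈ Finset.Icc 1 s,
        ((((n : ℚ) + 1) - i + 1) * (((n : ℚ) + 1) + i) * ((k : ℚ) + 1) ^ 2 /
          ((((n : ℚ) + 1) - i) * (((n : ℚ) + 1) + i - 1))) =
      ((n : ℚ) + 1 + s) * ((k : ℚ) + 1) ^ (2 * s) / ((n : ℚ) + 1 - s) := by
  induction s with
  | zero =>
      simp
      field_simp
  | succ s ih =>
      have hs' : s ≤ n := Nat.le_of_succ_le hs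
      rw [Finset.prod_Icc_succ_top (by omega : 1 ≤ s + 1), ih hs']
      have hsn : (s : ℚ) + 1 ≤ n := by exact_mod_cast hs
      have h1 : (n : ℚ) + 1 - s ≠ 0 := by linarith
      have h2 : (n : ℚ) - s ≠ 0 := by
        intro h; nlinarith
      have h3 : (n : ℚ) + s + 1 ≠ 0 := by positivity
      push_cast
      have hpow : ((k : ℚ) + 1) ^ (2 * (s + 1)) = ((k : ℚ) + 1) ^ (2 * s) * ((k : ℚ) + 1) ^ 2 := by
        rw [← pow_add]; ring_nf
      rw [hpow, div_mul_div_comm, div_eq_div_iff (by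
            intro h
            rcases mul_eq_zero.1 h with h' | h'
            · exact h1 h'
            rcases mul_eq_zero.1 h' with h'' | h''
            · apply h2; linarith [h'']
            · apply h3; linarith [h''])
          (by intro h; apply h2; linarith [h])]
      ring
  
/-- For `0 ≤ s ≤ n` and positive `k`,
`∏_{1≤i≤s, s+1≤j≤n} [(j-i+1)(j+i)(k+1)²]/[(j-i)(j+i-1)]
  = (n+s)!(k+1)^{2s(n-s)}/((n-s)!(2s)!)`. -/
theorem rectangular_product_identity (n s k : ℕ) (hs : s ≤ n) (hk : 1 ≤ k) :
    ∏ p ∈ Finset.Icc 1 s ×ˢ Finset.Icc (s + 1) n,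
        ((((p.2 : ℚ) - p.1 + 1) * ((p.2 : ℚ) + p.1) * ((k : ℚ) + 1) ^ 2) /
          (((p.2 : ℚ) - p.1) * ((p.2 : ℚ) + p.1 - 1))) =
      (Nat.factorial (n + s) : ℚ) * ((k : ℚ) + 1) ^ (2 * s * (n - s)) /
        ((Nat.factorial (n - s) : ℚ) * (Nat.factorial (2 * s) : ℚ)) := by
  induction n, hs using Nat.le_induction with
  | base =>
      rw [Finset.Icc_eq_empty (by omega : ¬ s + 1 ≤ s), Finset.product_empty,
        Finset.prod_empty, Nat.sub_self, Nat.mul_zero, pow_zero, Nat.factorial_zero]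
      have h2s : s + s = 2 * s := by ring
      rw [h2s, mul_one]
      rw [Nat.cast_one, one_mul, div_self
        (Nat.cast_ne_zero.mpr (Nat.factorial_ne_zero _))]
  | succ n hn ih =>
      rw [Finset.prod_product] at ih ⊢
      have hins : Finset.Icc (s + 1) (n + 1) = insert (n + 1) (Finset.Icc (s + 1) n) := by
        ext x; simp [Finset.mem_Icc, Finset.mem_insert]; omega
      rw [hins]
      have hnot : (n + 1) ∉ Finset.Icc (s + 1) n := by simp
      simp_rw [Finset.prod_insert hnot]
      rw [Finset.prod_mul_distrib, ih]
      have hcol := col_prod n s k hn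
      push_cast at hcol ⊢
      rw [hcol]
      -- arithmetic
      have e1 : n + 1 + s = (n + s) + 1 := by omega
      have e3 : 2 * s * (n + 1 - s) = 2 * s * (n - s) + 2 * s := by
        have : n + 1 - s = (n - s) + 1 := by omega
        rw [this]; ring
      have e2 : n + 1 - s = (n - s) + 1 := by omega
      rw [e1, e3, e2, Nat.factorial_succ, Nat.factorial_succ, pow_add]
      have hf1 : (Nat.factorial (n + s) : ℚ) ≠ 0 := by exact_mod_cast (Nat.factorial_ne_zero _)
      have hf2 : (Nat.factorial (n - s) : ℚ) ≠ 0 := by exact_mod_cast (Nat.factorial_ne_zero _)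
      have hf3 : (Nat.factorial (2 * s) : ℚ) ≠ 0 := by exact_mod_cast (Nat.factorial_ne_zero _)
      have hsn : (s : ℚ) ≤ n := by exact_mod_cast hn
      have h1 : (n : ℚ) + 1 - s ≠ 0 := by intro h; nlinarith
      have e2' : ((n - s : ℕ) : ℚ) = (n : ℚ) - s := by
        push_cast [hn]; ring
      have h1' : (n : ℚ) - s + 1 ≠ 0 := by intro h; apply h1; linarith
      push_cast [e2']
      field_simp [h1']
      ring
end

section
/- For integers n ≥ 0 and any odd half-integer family: if μ_1,…,μ_{n+1} are rationals with 2μ_1 ∈ ℕ, μ_{i+1} - μ_i ∈ ℕ for all i, and 2μ_{n+1} odd, then the dimension of the irreducible o(2n+3)-module with highest weight ∑μ_iε_i equals 2·∑_{s=0}^{n} (-1)^{n-s}·C(n+s+1/2+μ_{s+1}, 2n+1)·d_{2n+1}(∑_{i=1}^s μ_iε_i + ∑_{i=s+1}^n (μ_{i+1}+1)ε_i), where d_{2n+1}(ν) is the Weyl dimension of the irreducible o(2n+1)-module with highest weight ν. -/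
/-- Binomial coefficient `C(x, m)` with the convention that it vanishes when `x < m`,
and otherwise equals the generalized binomial coefficient `x(x-1)⋯(x-m+1)/m!`. -/
noncomputable def cchoose (x : ℚ) (m : ℕ) : ℚ :=
  if x < m then 0 else (∏ i ∈ Finset.range m, (x - i)) / (Nat.factorial m)

/-!
`dimB m ν` is the ratio of the odd Vandermonde determinants `det [ℓ_i ^ (2j-1)]` at `ℓ = ν + ρ`
and at `ℓ = ρ`. In the `(n+1) × (n+1)` determinant at `ℓ = μ + ρ`, replacing the last column
`x ^ (2n+1)` by `x ∏_{j=1}^n (x² - j²)` changes nothing, since the difference is a combination of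
the other columns. Expanding along that column gives the identity: the `n × n` minors are the
numerators of the `B_n`-dimensions of the weights obtained by deleting `ℓ_s`, and because every
`ℓ_s` is a positive integer, `x ∏_{j=1}^n (x² - j²) = (2n+1)! C(n + x, 2n+1)` at `x = ℓ_s`,
truncation included. The normalisations at `ρ` differ by the factor `(2n+1)!/2`.
-/

open Finset Matrix Polynomial

theorem Matrix.det_vandermonde_eq_sum_prod_sub {R : Type*} [CommRing R] {n : ℕ}
    (v : Fin (n + 1) → R) (a : Fin n → R) :
    (vandermonde v).det = ∑ s : Fin (n + 1), (-1) ^ (s + n : ℕ) * (∏ i, (v s - a i)) *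
      (vandermonde (v ∘ s.succAbove)).det := by
  nontriviality R
  set Q : R[X] := ∏ i, (X - C (a i))
  have hQ : Q.Monic := monic_prod_of_monic _ _ fun i _ => monic_X_sub_C (a i)
  have hdeg : Q.natDegree = n := by
    simp [Q, natDegree_prod_of_monic _ _ fun i _ => monic_X_sub_C (a i)]
  have heval : ∀ y, Q.eval y = ∏ i, (y - a i) := fun y => by simp [Q, eval_prod]
  have hcol : (fun k => Q.eval (v k)) =
      fun k => ∑ j : Fin (n + 1), Q.coeff j • vandermonde v k j := by
    funext k
    rw [eval_eq_sum_range' (n := n + 1) (by omega), ← Fin.sum_univ_eq_sum_range]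
    simp [vandermonde_apply, mul_comm]
  have hlead : Q.coeff n = 1 := hdeg ▸ hQ.coeff_natDegree
  have hupd : ((vandermonde v).updateCol (Fin.last n) fun k => Q.eval (v k)).det =
      (vandermonde v).det := by
    rw [hcol, det_updateCol_sum, Fin.val_last, hlead, one_smul]
  rw [← hupd, det_succ_column _ (Fin.last n)]
  refine sum_congr rfl fun s _ => ?_
  congr 2
  · simp [heval]
  · ext i j
    simp [Fin.succAbove_last, vandermonde_apply]

def oddVandermonde {R : Type*} [CommRing R] {m : ℕ} (x : Fin m → R) : R :=
  (∏ i, x i) * (vandermonde fun i => x i ^ 2).det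

theorem oddVandermonde_eq_sum_prod_sub {R : Type*} [CommRing R] {n : ℕ}
    (x : Fin (n + 1) → R) (a : Fin n → R) :
    oddVandermonde x = ∑ s : Fin (n + 1), (-1) ^ (s + n : ℕ) * (x s * ∏ i, (x s ^ 2 - a i)) *
      oddVandermonde (x ∘ s.succAbove) := by
  rw [oddVandermonde, det_vandermonde_eq_sum_prod_sub _ a, mul_sum]
  refine sum_congr rfl fun s _ => ?_
  rw [oddVandermonde, Fin.prod_univ_succAbove _ s]
  simp only [Function.comp_def]
  ring

theorem oddVandermonde_succ {R : Type*} [CommRing R] {n : ℕ} (x : Fin (n + 1) → R) :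
    oddVandermonde x = x (Fin.last n) * (∏ i : Fin n, (x (Fin.last n) ^ 2 - x i.castSucc ^ 2)) *
      oddVandermonde (x ∘ Fin.castSucc) := by
  rw [oddVandermonde_eq_sum_prod_sub x fun i => x i.castSucc ^ 2, Fin.sum_univ_castSucc,
    sum_eq_zero fun s _ => by rw [prod_eq_zero (mem_univ s) (sub_self _)]; ring]
  simp [Fin.succAbove_last, ← two_mul, pow_mul]

theorem prod_Icc_one_eq_prod_fin {M : Type*} [CommMonoid M] (m : ℕ) (f : ℕ → M) :
    ∏ i ∈ Icc 1 m, f i = ∏ i : Fin m, f (i + 1) := by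
  rw [Fin.prod_univ_eq_prod_range (fun i => f (i + 1)), range_eq_Ico, prod_Ico_add' f 0 m 1]
  rfl

theorem prod_Icc_one_pairs_eq_prod_fin {M : Type*} [CommMonoid M] (m : ℕ) (f : ℕ × ℕ → M) :
    ∏ p ∈ (Icc 1 m ×ˢ Icc 1 m).filter (fun p => p.1 < p.2), f p =
      ∏ i : Fin m, ∏ j ∈ Ioi i, f (i + 1, j + 1) := by
  rw [prod_sigma']
  symm
  refine prod_bij' (fun p _ => ((p.1 : ℕ) + 1, (p.2 : ℕ) + 1))
    (fun p hp => ⟨⟨p.1 - 1, by grind⟩, ⟨p.2 - 1, by grind⟩⟩) ?_ ?_ ?_ ?_ (fun _ _ => rfl) <;> grind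

/-- The `i`-th coordinate, counted from `0`, of `ν + ρ` for `B_m`, where `ρ = ∑ (i - 1/2) ε_i`. -/
def weightAddRho (m : ℕ) (ν : ℕ → ℚ) (i : Fin m) : ℚ := ν (i + 1) + i + 1 / 2

theorem dimB_eq_div (m : ℕ) (ν : ℕ → ℚ) :
    dimB m ν = oddVandermonde (weightAddRho m ν) / oddVandermonde (weightAddRho m 0) := by
  simp only [oddVandermonde, weightAddRho, Pi.zero_apply, zero_add]
  rw [dimB, prod_Icc_one_pairs_eq_prod_fin, prod_Icc_one_eq_prod_fin, det_vandermonde,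
    det_vandermonde, mul_div_mul_comm, mul_comm]
  simp only [← prod_div_distrib]
  congr 1
  · exact prod_congr rfl fun i _ => by push_cast; ring
  · exact prod_congr rfl fun i _ => prod_congr rfl fun j _ => by push_cast; ring

theorem weightAddRho_comp_succAbove (μ : ℕ → ℚ) {n : ℕ} (s : Fin (n + 1)) :
    weightAddRho n (fun i => if i ≤ s then μ i else μ (i + 1) + 1) =
      weightAddRho (n + 1) μ ∘ s.succAbove := by
  funext i
  simp only [weightAddRho, Function.comp_apply]
  by_cases h : i.castSucc < s
  · rw [Fin.succAbove_of_castSucc_lt _ _ h, if_pos (by rwa [Fin.lt_def] at h), Fin.val_castSucc]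
  · rw [Fin.succAbove_of_le_castSucc _ _ (not_lt.mp h),
      if_neg (by rw [Fin.lt_def] at h; simpa using h), Fin.val_succ]
    push_cast
    ring

theorem prod_sq_sub_sq_add_half (n : ℕ) :
    ∏ i : Fin n, (((n : ℚ) + 1 / 2) ^ 2 - ((i : ℚ) + 1 / 2) ^ 2) = ((2 * n).factorial : ℚ) := by
  have hfactor : ∀ i : ℕ, ((n : ℚ) + 1 / 2) ^ 2 - ((i : ℚ) + 1 / 2) ^ 2 =
      ((n : ℚ) - i) * ((n + 1 + i : ℕ) : ℚ) := fun i => by push_cast; ring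
  rw [Fin.prod_univ_eq_prod_range fun i : ℕ => ((n : ℚ) + 1 / 2) ^ 2 - ((i : ℚ) + 1 / 2) ^ 2,
    prod_congr rfl fun i _ => hfactor i, prod_mul_distrib, ← descPochhammer_eval_eq_prod_range,
    descPochhammer_eval_eq_descFactorial, Nat.descFactorial_self, ← Nat.cast_prod,
    ← Nat.ascFactorial_eq_prod_range, ← Nat.cast_mul, Nat.factorial_mul_ascFactorial, two_mul]

theorem oddVandermonde_rho_succ (n : ℕ) :
    oddVandermonde (weightAddRho (n + 1) 0) * 2 =
      (2 * n + 1).factorial * oddVandermonde (weightAddRho n 0) := by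
  rw [oddVandermonde_succ, show weightAddRho (n + 1) 0 ∘ Fin.castSucc = weightAddRho n 0 from rfl]
  simp only [weightAddRho, Pi.zero_apply, zero_add, Fin.val_last, Fin.val_castSucc]
  rw [prod_sq_sub_sq_add_half, Nat.factorial_succ]
  push_cast
  ring

theorem descPochhammer_eval_add_eq_mul_prod {R : Type*} [CommRing R] (n : ℕ) (x : R) :
    (descPochhammer R (2 * n + 1)).eval (n + x) = x * ∏ j : Fin n, (x ^ 2 - ((j : R) + 1) ^ 2) := by
  rw [descPochhammer_eval_eq_prod_range]
  induction n with
  | zero => simp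
  | succ n ih =>
    rw [show 2 * (n + 1) + 1 = 2 * n + 1 + 1 + 1 by ring, prod_range_succ, prod_range_succ',
      Fin.prod_univ_castSucc]
    have hshift : ∏ k ∈ range (2 * n + 1), (((n + 1 : ℕ) : R) + x - ((k + 1 : ℕ) : R)) =
        ∏ k ∈ range (2 * n + 1), ((n : R) + x - k) :=
      prod_congr rfl fun k _ => by push_cast; ring
    simp only [hshift, ih, Fin.val_castSucc, Fin.val_last]
    push_cast
    ring

/-- At a natural number the truncation in `cchoose` is harmless: the falling factorial vanishes. -/
theorem cchoose_natCast (N m : ℕ) :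
    cchoose N m = (descPochhammer ℚ m).eval (N : ℚ) / m.factorial := by
  rw [cchoose, descPochhammer_eval_eq_prod_range]
  split_ifs with h
  · rw [← descPochhammer_eval_eq_prod_range, descPochhammer_eval_eq_descFactorial,
      Nat.descFactorial_eq_zero_iff_lt.mpr (by exact_mod_cast h)]
    simp
  · rfl

theorem cchoose_natCast_add (n k : ℕ) :
    cchoose (n + k) (2 * n + 1) =
      k * (∏ j : Fin n, ((k : ℚ) ^ 2 - ((j : ℚ) + 1) ^ 2)) / (2 * n + 1).factorial := by
  rw [← Nat.cast_add, cchoose_natCast, Nat.cast_add, descPochhammer_eval_add_eq_mul_prod]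

theorem exists_nat_eq_add_half {n : ℕ} {μ : ℕ → ℚ} (h1 : ∃ a : ℕ, 2 * μ 1 = a)
    (hdom : ∀ i : ℕ, 1 ≤ i → i ≤ n → ∃ m : ℕ, μ (i + 1) - μ i = m)
    (hodd : ∃ m : ℕ, 2 * μ (n + 1) = 2 * m + 1) {s : ℕ} (hs : s ≤ n) :
    ∃ k : ℕ, μ (s + 1) + 1 / 2 = k := by
  have hinc : ∀ s ≤ n, ∃ d : ℕ, μ (s + 1) = μ 1 + d := by
    intro s hs
    induction s with
    | zero => exact ⟨0, by simp⟩
    | succ s ih =>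
      obtain ⟨d, hd⟩ := ih (by omega)
      obtain ⟨e, he⟩ := hdom (s + 1) (by omega) hs
      exact ⟨d + e, by push_cast; linarith⟩
  obtain ⟨a, ha⟩ := h1
  obtain ⟨m, hm⟩ := hodd
  obtain ⟨D, hD⟩ := hinc n le_rfl
  obtain ⟨d, hd⟩ := hinc s hs
  have ha_odd : a + 2 * D = 2 * m + 1 := by
    exact_mod_cast (by linarith : (a : ℚ) + 2 * D = 2 * m + 1)
  obtain ⟨c, rfl⟩ : ∃ c, a = 2 * c + 1 := ⟨m - D, by omega⟩
  exact ⟨c + d + 1, by push_cast at ha ⊢; linarith⟩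

theorem neg_one_pow_mul_cchoose_mul_dimB (n : ℕ) (μ : ℕ → ℚ) (s : Fin (n + 1))
    (hμ : ∃ k : ℕ, μ (s + 1) + 1 / 2 = k) :
    (-1 : ℚ) ^ (n - s) * cchoose ((n : ℚ) + (s : ℚ) + 1 / 2 + μ (s + 1)) (2 * n + 1) *
        dimB n (fun i => if i ≤ s then μ i else μ (i + 1) + 1) =
      (-1) ^ ((s : ℕ) + n) *
          (weightAddRho (n + 1) μ s *
            ∏ j : Fin n, (weightAddRho (n + 1) μ s ^ 2 - ((j : ℚ) + 1) ^ 2)) *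
          oddVandermonde (weightAddRho (n + 1) μ ∘ s.succAbove) /
        ((2 * n + 1).factorial * oddVandermonde (weightAddRho n 0)) := by
  obtain ⟨k, hk⟩ := hμ
  have hℓ : weightAddRho (n + 1) μ s = (k + s : ℕ) := by
    simp only [weightAddRho]; push_cast; linarith
  have hsign : (-1 : ℚ) ^ (n - s) = (-1) ^ ((s : ℕ) + n) := by
    rw [show (s : ℕ) + n = n - s + 2 * s by omega, pow_add, pow_mul, neg_one_sq, one_pow, mul_one]
  rw [show (n : ℚ) + s + 1 / 2 + μ (s + 1) = n + (k + s : ℕ) by push_cast; linarith,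
    cchoose_natCast_add, dimB_eq_div, weightAddRho_comp_succAbove, ← hℓ, hsign]
  ring

/-- For a dominant integral weight `λ = ∑ μ_i ε_i` of `o(2n+3)` with `2μ_{n+1}` odd,
`d_{2n+3}(λ) = 2∑_{s=0}^{n}(-1)^{n-s} C(n+s+1/2+μ_{s+1}, 2n+1)
  d_{2n+1}(∑_{i≤s} μ_i ε_i + ∑_{i>s}(μ_{i+1}+1) ε_i)`,
where the dimensions are Weyl dimension products of types `B_{n+1}` and `B_n`. -/
theorem macdonald_analogue_B_odd (n : ℕ) (μ : ℕ → ℚ)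
    (h1 : ∃ a : ℕ, 2 * μ 1 = a)
    (hdom : ∀ i : ℕ, 1 ≤ i → i ≤ n → ∃ m : ℕ, μ (i + 1) - μ i = m)
    (hodd : ∃ m : ℕ, 2 * μ (n + 1) = 2 * m + 1) :
    dimB (n + 1) μ =
      2 * ∑ s ∈ Finset.range (n + 1), (-1 : ℚ) ^ (n - s) *
        cchoose ((n : ℚ) + (s : ℚ) + 1/2 + μ (s + 1)) (2 * n + 1) *
        dimB n (fun i => if i ≤ s then μ i else μ (i + 1) + 1) := by
  have hsummand := fun s : Fin (n + 1) => neg_one_pow_mul_cchoose_mul_dimB n μ s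
    (exists_nat_eq_add_half h1 hdom hodd (Nat.lt_succ_iff.mp s.isLt))
  rw [← Fin.sum_univ_eq_sum_range, sum_congr rfl fun s _ => hsummand s, ← sum_div,
    ← oddVandermonde_eq_sum_prod_sub, ← oddVandermonde_rho_succ, dimB_eq_div]
  ring
end

section
/- With the same setup, f_{s,t}(r) = x_{s,r} - ∑_{k=t}^{s-1} x_{k,r}·f_{s,k+1}(k+1) for all 0 ≤ t < s ≤ n and |r| ≤ n+1. -/
/-!
By the conventions on `x`, row `t` of the matrix of `f_{s,t}(r)` is `(1, 0, …, 0, x_{t,r})`.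
Subtracting `x_{t,r}` times the first column from the last one turns it into the first unit
vector; expanding along it and using linearity in the last column gives
`f_{s,t}(r) = f_{s,t+1}(r) - x_{t,r} f_{s,t+1}(t+1)`, and the identity follows by descending
induction on `t`, starting from `f_{s,s}(r) = x_{s,r}`.
-/

open Matrix Finset

/-- `fdet x s t r` is the determinant `f_{s,t}(r) = F_{s,t}(t+1, …, s, r)` of the
`(s-t+1)×(s-t+1)` matrix with rows indexed by `l = t, …, s` and columns given by
the index list `(t+1, …, s, r)`, with entries `x l θ`. -/
noncomputable def fdet {R : Type*} [CommRing R] (x : ℕ → ℤ → R) (s t : ℕ) (r : ℤ) : R :=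
  Matrix.det (Matrix.of fun a b : Fin (s - t + 1) =>
    x (t + (a : ℕ)) (if (b : ℕ) = s - t then r else (t : ℤ) + 1 + (b : ℕ)))

namespace Matrix

variable {R : Type*} [CommRing R]

theorem det_updateCol_sub_smul {n : Type*} [Fintype n] [DecidableEq n] (M : Matrix n n R)
    (j : n) (u w : n → R) (c : R) :
    (M.updateCol j (u - c • w)).det = (M.updateCol j u).det - c * (M.updateCol j w).det := by
  rw [sub_eq_add_neg, ← neg_smul, det_updateCol_add, det_updateCol_smul, neg_mul, sub_eq_add_neg]

theorem det_eq_det_submatrix_succ_succ_of_row_zero {N : ℕ}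
    (A : Matrix (Fin (N + 1)) (Fin (N + 1)) R) (h : A 0 = Pi.single 0 1) :
    A.det = (A.submatrix Fin.succ Fin.succ).det := by
  rw [det_succ_row_zero, Fin.sum_univ_succ, h]
  simp [Fin.succ_ne_zero]

end Matrix

section fdet

variable {R : Type*} [CommRing R] (x : ℕ → ℤ → R)

theorem fdet_eq_det_updateCol {s t N : ℕ} (h : s - t = N) (r : ℤ) :
    fdet x s t r = ((of fun a b : Fin (N + 1) => x (t + a) ((t : ℤ) + 1 + (b : ℕ))).updateCol
      (Fin.last N) fun a => x (t + a) r).det := by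
  subst h
  unfold fdet
  congr 1
  ext a b
  simp only [of_apply, updateCol_apply, Fin.ext_iff, Fin.val_last]
  exact apply_ite _ _ _ _

theorem fdet_self (s : ℕ) (r : ℤ) : fdet x s s r = x s r := by
  simp [fdet_eq_det_updateCol x (Nat.sub_self s), det_unique]

theorem fdet_eq_sub (hx1 : ∀ i : ℕ, x i ((i : ℤ) + 1) = 1)
    (hx0 : ∀ (i : ℕ) (j : ℤ), (i : ℤ) + 1 < j → x i j = 0) {s t : ℕ} (h : t < s) (r : ℤ) :
    fdet x s t r = fdet x s (t + 1) r - x t r * fdet x s (t + 1) ((t : ℤ) + 1) := by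
  obtain ⟨N, hN⟩ : ∃ N, s - t = N + 1 := ⟨s - t - 1, by omega⟩
  set M := of fun a b : Fin (N + 2) => x (t + a) ((t : ℤ) + 1 + (b : ℕ))
  set A := M.updateCol (Fin.last _)
    ((fun a : Fin (N + 2) => x (t + a) r) - x t r • fun a : Fin (N + 2) => x (t + a) (t + 1))
  have hcol : fdet x s t r = A.det := by
    rw [fdet_eq_det_updateCol x hN, ← det_updateCol_add_smul_self _ Fin.last_pos.ne' (-x t r)]
    simp only [A, M, updateCol_idem]
    congr 2
    ext a
    simp [Fin.ext_iff, sub_eq_add_neg]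
  have hrow : A 0 = Pi.single 0 1 := by
    ext b
    rcases Fin.eq_zero_or_eq_succ b with rfl | ⟨b, rfl⟩
    · simp [A, M, hx1]
    · rcases eq_or_ne b (Fin.last N) with rfl | hb
      · simp [A, M, hx1]
      · simp only [A, M, updateCol_apply, of_apply, ← Fin.succ_last, Fin.succ_inj, hb, if_false,
          Fin.val_succ, Fin.val_zero, add_zero, Pi.single_apply, Fin.succ_ne_zero]
        exact hx0 t _ (by omega)
  have hminor : A.submatrix Fin.succ Fin.succ =
      (of fun a b : Fin (N + 1) => x (t + 1 + a) (((t + 1 : ℕ) : ℤ) + 1 + (b : ℕ))).updateCol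
        (Fin.last N) ((fun a : Fin (N + 1) => x (t + 1 + a) r) -
          x t r • fun a : Fin (N + 1) => x (t + 1 + a) (t + 1)) := by
    ext a b
    simp only [A, M, submatrix_apply, updateCol_apply, of_apply, ← Fin.succ_last, Fin.succ_inj,
      Fin.val_succ, Pi.sub_apply, Pi.smul_apply, smul_eq_mul]
    split_ifs
    · ring_nf
    · push_cast; ring_nf
  rw [hcol, det_eq_det_submatrix_succ_succ_of_row_zero _ hrow, hminor, det_updateCol_sub_smul,
    fdet_eq_det_updateCol x (t := t + 1) (N := N) (by omega),
    fdet_eq_det_updateCol x (t := t + 1) (N := N) (by omega)]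

theorem fdet_eq_sub_sum_Ico (hx1 : ∀ i : ℕ, x i ((i : ℤ) + 1) = 1)
    (hx0 : ∀ (i : ℕ) (j : ℤ), (i : ℤ) + 1 < j → x i j = 0) {s t : ℕ} (h : t ≤ s) (r : ℤ) :
    fdet x s t r = x s r - ∑ k ∈ Ico t s, x k r * fdet x s (k + 1) ((k : ℤ) + 1) := by
  induction h using Nat.decreasingInduction with
  | self => simp [fdet_self]
  | of_succ k hk ih => rw [fdet_eq_sub x hx1 hx0 hk, ih, sum_eq_sum_Ico_succ_bot hk]; ring

end fdet

theorem fdet_column_expansion_general {R : Type*} [CommRing R] (x : ℕ → ℤ → R)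
    (hx1 : ∀ i : ℕ, x i ((i : ℤ) + 1) = 1)
    (hx0 : ∀ (i : ℕ) (j : ℤ), (i : ℤ) + 1 < j → x i j = 0)
    (t s : ℕ) (hts : t < s) (r : ℤ) :
    fdet x s t r = x s r - ∑ k ∈ Finset.Icc t (s - 1), x k r * fdet x s (k + 1) ((k : ℤ) + 1) := by
  rw [Icc_sub_one_right_eq_Ico_of_not_isMin (not_isMin_of_lt hts)]
  exact fdet_eq_sub_sum_Ico x hx1 hx0 hts.le r

/-- Lemma 2.1, second identity: with the conventions `x_{i,i+1} = 1` and `x_{i,j} = 0`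
for `j > i+1`, one has `f_{s,t}(r) = x_{s,r} - ∑_{k=t}^{s-1} x_{k,r} f_{s,k+1}(k+1)`
for `0 ≤ t < s ≤ n` and `|r| ≤ n+1`. -/
theorem fdet_column_expansion {R : Type*} [CommRing R] (n : ℕ) (x : ℕ → ℤ → R)
    (hx1 : ∀ i : ℕ, x i ((i : ℤ) + 1) = 1)
    (hx0 : ∀ (i : ℕ) (j : ℤ), (i : ℤ) + 1 < j → x i j = 0)
    (t s : ℕ) (hts : t < s) (hsn : s ≤ n) (r : ℤ) (hr : |r| ≤ (n : ℤ) + 1) :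
    fdet x s t r = x s r - ∑ k ∈ Finset.Icc t (s - 1), x k r * fdet x s (k + 1) ((k : ℤ) + 1) :=
  fdet_column_expansion_general x hx1 hx0 t s hts r
end

section
/- For μ_1, μ_2 ∈ ℂ with μ_2 - μ_1 ∈ ℕ and μ_2 + μ_1 ∈ ℕ, the subspace ∑_{i=0}^{μ_2-μ_1} ∑_{j=0}^{μ_2+μ_1} ℂ·x_1^i x_{-1}^j of ℂ[x_1,x_{-1}] is invariant under the six operators A_{1,1} = x_1∂_1 - x_{-1}∂_{-1} + μ_1, A_{2,2} = -x_1∂_1 - x_{-1}∂_{-1} + μ_2, A_{2,1} = ∂_1, A_{2,-1} = ∂_{-1}, A_{1,2} = -x_1²∂_1 + (μ_2-μ_1)x_1, A_{-1,2} = -x_{-1}²∂_{-1} + (μ_2+μ_1)x_{-1}, and has dimension (μ_2-μ_1+1)(μ_2+μ_1+1). -/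
open MvPolynomial

/-- `A_{1,1} = x_1∂_1 - x_{-1}∂_{-1} + μ_1` on `ℂ[x_1, x_{-1}]`. -/
noncomputable def opB11 (μ₁ : ℂ) (p : MvPolynomial (Fin 2) ℂ) : MvPolynomial (Fin 2) ℂ :=
  X 0 * pderiv 0 p - X 1 * pderiv 1 p + μ₁ • p

/-- `A_{2,2} = -x_1∂_1 - x_{-1}∂_{-1} + μ_2`. -/
noncomputable def opB22 (μ₂ : ℂ) (p : MvPolynomial (Fin 2) ℂ) : MvPolynomial (Fin 2) ℂ :=
  -(X 0 * pderiv 0 p) - X 1 * pderiv 1 p + μ₂ • p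

/-- `A_{2,1} = ∂_1`. -/
noncomputable def opB21 (p : MvPolynomial (Fin 2) ℂ) : MvPolynomial (Fin 2) ℂ := pderiv 0 p

/-- `A_{2,-1} = ∂_{-1}`. -/
noncomputable def opB2m1 (p : MvPolynomial (Fin 2) ℂ) : MvPolynomial (Fin 2) ℂ := pderiv 1 p

/-- `A_{1,2} = -x_1²∂_1 + (μ_2-μ_1)x_1`. -/
noncomputable def opB12 (μ₁ μ₂ : ℂ) (p : MvPolynomial (Fin 2) ℂ) : MvPolynomial (Fin 2) ℂ :=
  -(X 0 ^ 2 * pderiv 0 p) + (μ₂ - μ₁) • (X 0 * p)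

/-- `A_{-1,2} = -x_{-1}²∂_{-1} + (μ_2+μ_1)x_{-1}`. -/
noncomputable def opBm12 (μ₁ μ₂ : ℂ) (p : MvPolynomial (Fin 2) ℂ) : MvPolynomial (Fin 2) ℂ :=
  -(X 1 ^ 2 * pderiv 1 p) + (μ₂ + μ₁) • (X 1 * p)

/-- The span of monomials `x_1^i x_{-1}^j` with `i ≤ μ_2-μ_1` and `j ≤ μ_2+μ_1`. -/
noncomputable def o4Module (a b : ℕ) : Submodule ℂ (MvPolynomial (Fin 2) ℂ) :=
  Submodule.span ℂ {q | ∃ i j : ℕ, i ≤ a ∧ j ≤ b ∧ q = X 0 ^ i * X 1 ^ j}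

local notation "P2" => MvPolynomial (Fin 2) ℂ

lemma key0 (i j : ℕ) :
    X 0 * pderiv 0 ((X 0 : P2) ^ i * X 1 ^ j) = (i : ℂ) • (X 0 ^ i * X 1 ^ j) := by
  cases i with
  | zero => simp [pderiv_mul, pderiv_pow]
  | succ k =>
    simp only [pderiv_mul, pderiv_pow, pderiv_X_self, pderiv_X_of_ne (show (1:Fin 2) ≠ 0 by decide),
      mul_zero, mul_one, add_zero, Nat.add_sub_cancel, smul_eq_C_mul, C_eq_coe_nat]
    ring

lemma key1 (i j : ℕ) :
    X 1 * pderiv 1 ((X 0 : P2) ^ i * X 1 ^ j) = (j : ℂ) • (X 0 ^ i * X 1 ^ j) := by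
  cases j with
  | zero => simp [pderiv_mul, pderiv_pow]
  | succ k =>
    simp only [pderiv_mul, pderiv_pow, pderiv_X_self, pderiv_X_of_ne (show (0:Fin 2) ≠ 1 by decide),
      mul_zero, mul_one, add_zero, zero_mul, zero_add, Nat.add_sub_cancel, smul_eq_C_mul,
      C_eq_coe_nat]
    ring

lemma key0' (i j : ℕ) :
    (X 0 : P2) ^ 2 * pderiv 0 ((X 0 : P2) ^ i * X 1 ^ j) = (i : ℂ) • (X 0 ^ (i + 1) * X 1 ^ j) := by
  cases i with
  | zero => simp [pderiv_mul, pderiv_pow]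
  | succ k =>
    simp only [pderiv_mul, pderiv_pow, pderiv_X_self, pderiv_X_of_ne (show (1:Fin 2) ≠ 0 by decide),
      mul_zero, mul_one, add_zero, Nat.add_sub_cancel, smul_eq_C_mul, C_eq_coe_nat]
    ring

lemma key1' (i j : ℕ) :
    (X 1 : P2) ^ 2 * pderiv 1 ((X 0 : P2) ^ i * X 1 ^ j) = (j : ℂ) • (X 0 ^ i * X 1 ^ (j + 1)) := by
  cases j with
  | zero => simp [pderiv_mul, pderiv_pow]
  | succ k =>
    simp only [pderiv_mul, pderiv_pow, pderiv_X_self, pderiv_X_of_ne (show (0:Fin 2) ≠ 1 by decide),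
      mul_zero, mul_one, add_zero, zero_mul, zero_add, Nat.add_sub_cancel, smul_eq_C_mul,
      C_eq_coe_nat]
    ring

lemma memo {a b i j : ℕ} (hi : i ≤ a) (hj : j ≤ b) :
    (X 0 : P2) ^ i * X 1 ^ j ∈ o4Module a b :=
  Submodule.subset_span ⟨i, j, hi, hj, rfl⟩

/-- Stability of a submodule under a linear map, checked on generators. -/
lemma stab {S : Set P2} {M : Submodule ℂ P2} (T : P2 →ₗ[ℂ] P2)
    (h : ∀ g ∈ S, T g ∈ M) {p : P2} (hp : p ∈ Submodule.span ℂ S) : T p ∈ M := by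
  have hle : Submodule.span ℂ S ≤ M.comap T := Submodule.span_le.mpr (fun g hg => h g hg)
  exact hle hp

noncomputable def D (k : Fin 2) : P2 →ₗ[ℂ] P2 := (pderiv k : Derivation ℂ P2 P2).toLinearMap

noncomputable def MX (q : P2) : P2 →ₗ[ℂ] P2 := LinearMap.mulLeft ℂ q

@[simp] lemma MXD_apply (q : P2) (k : Fin 2) (p : P2) : (MX q ∘ₗ D k) p = q * pderiv k p := rfl
@[simp] lemma MX_apply (q p : P2) : MX q p = q * p := rfl
@[simp] lemma D_apply (k : Fin 2) (p : P2) : D k p = pderiv k p := rfl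

/-- For `μ_2-μ_1 = a ∈ ℕ` and `μ_2+μ_1 = b ∈ ℕ`, the subspace spanned by
`x_1^i x_{-1}^j` (`i ≤ a`, `j ≤ b`) is invariant under the six `o(4)` operators
and has dimension `(a+1)(b+1)`. -/
theorem o4_finite_dimensional_module (μ₁ μ₂ : ℂ) (a b : ℕ)
    (ha : μ₂ - μ₁ = (a : ℂ)) (hb : μ₂ + μ₁ = (b : ℂ)) :
    (∀ p ∈ o4Module a b,
        opB11 μ₁ p ∈ o4Module a b ∧ opB22 μ₂ p ∈ o4Module a b ∧
        opB21 p ∈ o4Module a b ∧ opB2m1 p ∈ o4Module a b ∧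
        opB12 μ₁ μ₂ p ∈ o4Module a b ∧ opBm12 μ₁ μ₂ p ∈ o4Module a b) ∧
    Module.finrank ℂ (o4Module a b) = (a + 1) * (b + 1) := by
  constructor
  · intro p hp
    refine ⟨?_, ?_, ?_, ?_, ?_, ?_⟩
    · refine stab (MX (X 0) ∘ₗ D 0 - MX (X 1) ∘ₗ D 1 + μ₁ • LinearMap.id) ?_ hp
      rintro g ⟨i, j, hi, hj, rfl⟩
      simp only [LinearMap.add_apply, LinearMap.sub_apply, LinearMap.neg_apply,
        LinearMap.smul_apply, LinearMap.id_apply, MXD_apply, MX_apply, D_apply]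
      rw [key0, key1]
      have : (i:ℂ) • ((X 0:P2) ^ i * X 1 ^ j) - (j:ℂ) • (X 0 ^ i * X 1 ^ j)
          + μ₁ • (X 0 ^ i * X 1 ^ j) = ((i:ℂ) - j + μ₁) • (X 0 ^ i * X 1 ^ j) := by
        module
      rw [this]
      exact Submodule.smul_mem _ _ (memo hi hj)
    · refine stab (-(MX (X 0) ∘ₗ D 0) - MX (X 1) ∘ₗ D 1 + μ₂ • LinearMap.id) ?_ hp
      rintro g ⟨i, j, hi, hj, rfl⟩
      simp only [LinearMap.add_apply, LinearMap.sub_apply, LinearMap.neg_apply,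
        LinearMap.smul_apply, LinearMap.id_apply, MXD_apply, MX_apply, D_apply]
      rw [key0, key1]
      have : -((i:ℂ) • ((X 0:P2) ^ i * X 1 ^ j)) - (j:ℂ) • (X 0 ^ i * X 1 ^ j)
          + μ₂ • (X 0 ^ i * X 1 ^ j) = (-(i:ℂ) - j + μ₂) • (X 0 ^ i * X 1 ^ j) := by
        module
      rw [this]
      exact Submodule.smul_mem _ _ (memo hi hj)
    · refine stab (D 0) ?_ hp
      rintro g ⟨i, j, hi, hj, rfl⟩
      simp only [LinearMap.add_apply, LinearMap.sub_apply, LinearMap.neg_apply,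
        LinearMap.smul_apply, LinearMap.id_apply, MXD_apply, MX_apply, D_apply]
      cases i with
      | zero => simp [pderiv_mul, pderiv_pow]
      | succ k =>
        have : pderiv 0 ((X 0:P2) ^ (k+1) * X 1 ^ j) = ((k:ℂ)+1) • (X 0 ^ k * X 1 ^ j) := by
          simp only [pderiv_mul, pderiv_pow, pderiv_X_self,
            pderiv_X_of_ne (show (1:Fin 2) ≠ 0 by decide),
            mul_zero, mul_one, add_zero, Nat.add_sub_cancel, smul_eq_C_mul, map_add, C_1,
            C_eq_coe_nat]
          push_cast
          ring
        rw [this]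
        exact Submodule.smul_mem _ _ (memo (le_trans (Nat.le_succ k) hi) hj)
    · refine stab (D 1) ?_ hp
      rintro g ⟨i, j, hi, hj, rfl⟩
      simp only [LinearMap.add_apply, LinearMap.sub_apply, LinearMap.neg_apply,
        LinearMap.smul_apply, LinearMap.id_apply, MXD_apply, MX_apply, D_apply]
      cases j with
      | zero => simp [pderiv_mul, pderiv_pow]
      | succ k =>
        have : pderiv 1 ((X 0:P2) ^ i * X 1 ^ (k+1)) = ((k:ℂ)+1) • (X 0 ^ i * X 1 ^ k) := by
          simp only [pderiv_mul, pderiv_pow, pderiv_X_self,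
            pderiv_X_of_ne (show (0:Fin 2) ≠ 1 by decide),
            mul_zero, mul_one, add_zero, zero_mul, zero_add, Nat.add_sub_cancel, smul_eq_C_mul,
            map_add, C_1, C_eq_coe_nat]
          push_cast
          ring
        rw [this]
        exact Submodule.smul_mem _ _ (memo hi (le_trans (Nat.le_succ k) hj))
    · refine stab (-(MX (X 0 ^ 2) ∘ₗ D 0) + (μ₂ - μ₁) • MX (X 0)) ?_ hp
      rintro g ⟨i, j, hi, hj, rfl⟩
      simp only [LinearMap.add_apply, LinearMap.sub_apply, LinearMap.neg_apply,
        LinearMap.smul_apply, LinearMap.id_apply, MXD_apply, MX_apply, D_apply]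
      rw [key0', ha]
      have : -((i:ℂ) • ((X 0:P2) ^ (i+1) * X 1 ^ j))
          + (a:ℂ) • (X 0 * (X 0 ^ i * X 1 ^ j)) = ((a:ℂ) - i) • (X 0 ^ (i+1) * X 1 ^ j) := by
        rw [sub_smul]
        ring_nf
      rw [this]
      rcases lt_or_eq_of_le hi with h | h
      · exact Submodule.smul_mem _ _ (memo h hj)
      · subst h
        simp
    · refine stab (-(MX (X 1 ^ 2) ∘ₗ D 1) + (μ₂ + μ₁) • MX (X 1)) ?_ hp
      rintro g ⟨i, j, hi, hj, rfl⟩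
      simp only [LinearMap.add_apply, LinearMap.sub_apply, LinearMap.neg_apply,
        LinearMap.smul_apply, LinearMap.id_apply, MXD_apply, MX_apply, D_apply]
      rw [key1', hb]
      have : -((j:ℂ) • ((X 0:P2) ^ i * X 1 ^ (j+1)))
          + (b:ℂ) • (X 1 * (X 0 ^ i * X 1 ^ j)) = ((b:ℂ) - j) • (X 0 ^ i * X 1 ^ (j+1)) := by
        rw [sub_smul]
        ring_nf
      rw [this]
      rcases lt_or_eq_of_le hj with h | h
      · exact Submodule.smul_mem _ _ (memo hi h)
      · subst h
        simp
  · -- dimension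
    set f : Fin (a+1) × Fin (b+1) → P2 := fun p => X 0 ^ (p.1 : ℕ) * X 1 ^ (p.2 : ℕ) with hf
    have hset : {q : P2 | ∃ i j : ℕ, i ≤ a ∧ j ≤ b ∧ q = X 0 ^ i * X 1 ^ j} = Set.range f := by
      ext q
      constructor
      · rintro ⟨i, j, hi, hj, rfl⟩
        exact ⟨(⟨i, Nat.lt_succ_of_le hi⟩, ⟨j, Nat.lt_succ_of_le hj⟩), rfl⟩
      · rintro ⟨⟨i, j⟩, rfl⟩
        exact ⟨i, j, Nat.lt_succ_iff.mp i.isLt, Nat.lt_succ_iff.mp j.isLt, rfl⟩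
    have hmono : ∀ p : Fin (a+1) × Fin (b+1),
        f p = monomial (Finsupp.single 0 (p.1 : ℕ) + Finsupp.single 1 (p.2 : ℕ)) (1 : ℂ) := by
      intro p
      rw [hf]
      simp [X_pow_eq_monomial, monomial_mul]
    have hg : Function.Injective
        (fun p : Fin (a+1) × Fin (b+1) =>
          Finsupp.single (0 : Fin 2) (p.1 : ℕ) + Finsupp.single 1 (p.2 : ℕ)) := by
      intro p q h
      simp only at h
      have h0 := congrArg (fun s => s 0) h
      have h1 := congrArg (fun s => s 1) h
      simp [Finsupp.single_apply] at h0 h1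
      exact Prod.ext (Fin.ext h0) (Fin.ext h1)
    have hli : LinearIndependent ℂ f := by
      have : f = (fun s => (monomial s (1 : ℂ) : P2)) ∘
          (fun p : Fin (a+1) × Fin (b+1) =>
            Finsupp.single (0 : Fin 2) (p.1 : ℕ) + Finsupp.single 1 (p.2 : ℕ)) := by
        funext p
        exact hmono p
      rw [this]
      exact (basisMonomials (Fin 2) ℂ).linearIndependent.comp _ hg
    have : o4Module a b = Submodule.span ℂ (Set.range f) := by
      rw [o4Module, hset]
    rw [this, finrank_span_eq_card hli]
    simp [mul_comm]
end
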